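/- arXiv:1210.5090 — 5 statements merged into one kernel-verified Lean document; each statement's English description precedes it below -/
import Mathlib

section
/- Let a > 0 and 0 < c ≤ 1, and define φ_c(l) = (c·l²/3)·exp(−c·a·l/2) for l > 0. Then φ_c attains its maximum over (0,∞) at the unique point l̂_c = 4/(c·a); moreover φ_c(l̂_c) = (1/c)·φ_1(l̂_1) (so the optimal diffusion speed is inversely proportional to c), and the corresponding asymptotic acceptance rate is exp(−c·a·l̂_c/2) = e^{−2} ≈ 0.1353. -/
open Real Set

lemma aux_strict (u : ℝ) (hu : 0 < u) (hne : u ≠ 2) :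
    u ^ 2 * Real.exp (-u) < 4 * Real.exp (-2) := by
  have h1 : u / 2 < Real.exp (u / 2 - 1) := by
    have := Real.add_one_lt_exp (x := u / 2 - 1) (by intro h; apply hne; linarith)
    linarith
  have h2 : Real.exp (u / 2 - 1) * Real.exp (-(u / 2)) = Real.exp (-1) := by
    rw [← Real.exp_add]; ring_nf
  have hposl : 0 < u / 2 * Real.exp (-(u / 2)) := by positivity
  have h3 : u / 2 * Real.exp (-(u / 2)) < Real.exp (-1) := by
    rw [← h2]
    exact mul_lt_mul_of_pos_right h1 (Real.exp_pos _)
  have h4 : (u / 2 * Real.exp (-(u / 2))) ^ 2 < Real.exp (-1) ^ 2 := by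
    exact pow_lt_pow_left₀ h3 (le_of_lt hposl) (by norm_num)
  have h5 : Real.exp (-(u/2)) ^ 2 = Real.exp (-u) := by
    rw [← Real.exp_nat_mul]; ring_nf
  have h6 : Real.exp (-1) ^ 2 = Real.exp (-2) := by
    rw [← Real.exp_nat_mul]; norm_num
  nlinarith [h4, h5, h6]

lemma aux_le (u : ℝ) (hu : 0 < u) :
    u ^ 2 * Real.exp (-u) ≤ 4 * Real.exp (-2) := by
  rcases eq_or_ne u 2 with h | h
  · subst h; norm_num
  · exact (aux_strict u hu h).le

/-- For `a > 0` and `0 < c ≤ 1`, the Metropolis-within-Gibbs speed measure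
`φ_c(l) = (c l²/3) exp(-c a l/2)` attains its maximum on `(0,∞)` at the unique point
`l̂_c = 4/(c a)`; moreover `φ_c(l̂_c) = (1/c) φ_1(l̂_1)` and the corresponding asymptotic
acceptance rate is `exp(-c a l̂_c / 2) = e⁻²`. -/
theorem speed_measure_optimal_scaling_within_gibbs (a c : ℝ) (ha : 0 < a)
    (hc0 : 0 < c) (hc1 : c ≤ 1)
    (φ : ℝ → ℝ → ℝ) (hφ : ∀ c' l, φ c' l = c' * l ^ 2 / 3 * Real.exp (-(c' * a * l / 2))) :
    IsMaxOn (φ c) (Set.Ioi (0:ℝ)) (4 / (c * a)) ∧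
      (∀ l ∈ Set.Ioi (0:ℝ), φ c l = φ c (4 / (c * a)) → l = 4 / (c * a)) ∧
      φ c (4 / (c * a)) = (1 / c) * φ 1 (4 / (1 * a)) ∧
      Real.exp (-(c * a * (4 / (c * a)) / 2)) = Real.exp (-2) := by
  have hca : 0 < c * a := mul_pos hc0 ha
  have hca' : c * a ≠ 0 := ne_of_gt hca
  have hexp1 : c * a * (4 / (c * a)) / 2 = 2 := by field_simp; ring
  have hval : φ c (4 / (c * a)) = 16 / (3 * c * a ^ 2) * Real.exp (-2) := by
    rw [hφ, hexp1]
    field_simp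
    ring
  refine ⟨?_, ?_, ?_, by rw [hexp1]⟩
  · intro l hl
    simp only [Set.mem_Ioi] at hl
    simp only [Set.mem_setOf_eq, hval, hφ]
    have hu : 0 < c * a * l / 2 := by positivity
    have key := aux_le (c * a * l / 2) hu
    have hE := Real.exp_pos (-(c * a * l / 2))
    have hE2 := Real.exp_pos (-2 : ℝ)
    rw [div_pow] at key
    have h2 : (c * a * l) ^ 2 * Real.exp (-(c * a * l / 2)) ≤ 16 * Real.exp (-2) := by
      nlinarith [key]
    rw [div_mul_eq_mul_div, div_mul_eq_mul_div, div_le_div_iff₀ (by norm_num) (by positivity)]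
    nlinarith [h2, mul_pos hc0 hE2, hE]
  · intro l hl heq
    simp only [Set.mem_Ioi] at hl
    by_contra hne
    have hu : 0 < c * a * l / 2 := by positivity
    have hne2 : c * a * l / 2 ≠ 2 := by
      intro h
      apply hne
      field_simp at h ⊢
      linarith
    have key := aux_strict (c * a * l / 2) hu hne2
    rw [hφ, hval] at heq
    have hE2 := Real.exp_pos (-2 : ℝ)
    rw [div_pow] at key
    have h2 : (c * a * l) ^ 2 * Real.exp (-(c * a * l / 2)) < 16 * Real.exp (-2) := by
      nlinarith [key]
    have : c * l ^ 2 / 3 * Real.exp (-(c * a * l / 2)) < 16 / (3 * c * a ^ 2) * Real.exp (-2) := by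
      rw [div_mul_eq_mul_div, div_mul_eq_mul_div, div_lt_div_iff₀ (by norm_num) (by positivity)]
      nlinarith [h2, mul_pos hc0 hE2, Real.exp_pos (-(c * a * l / 2))]
    linarith [heq ▸ this]
  · have hexp1' : (1:ℝ) * a * (4 / (1 * a)) / 2 = 2 := by field_simp; norm_num
    rw [hval, hφ, hexp1']
    field_simp
    ring
end

section
/- Let m ≥ 1 be an integer and for each d let B_d be a binomial random variable with parameters d and p_d ∈ (0,1). If p_d → 0 and d·p_d → ∞ as d → ∞, then E[(B_d − d·p_d)^{2m}] / (d·p_d)^m → ∏_{j=1}^m (2j−1) as d → ∞. -/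
open Filter Finset

/-- `nu r p = ((1-p)*(-p)^r + p*(1-p)^r)/p` for `r ≥ 1`. -/
noncomputable def bnu (r : ℕ) (p : ℝ) : ℝ := (1-p)^r - (1-p)*(-p)^(r-1)

/-- coefficient functions -/
noncomputable def bh : ℕ → ℕ → ℝ → ℝ
  | 0, 0, _ => 1
  | _+1, 0, _ => 0
  | n, k+1, p => ∑ j ∈ range n, (n.choose j : ℝ) * bnu (n-j) p * bh j k p

lemma bh_zero_of_lt : ∀ (k n : ℕ), n < 2*k → ∀ p, bh n k p = 0 := by
  intro k
  induction k with
  | zero => intro n hn; omega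
  | succ k ih =>
    intro n hn p
    match n, hn with
    | 0, hn => rfl
    | (n+1), hn =>
      show (∑ j ∈ range (n+1), ((n+1).choose j : ℝ) * bnu (n+1-j) p * bh j k p) = 0
      apply Finset.sum_eq_zero
      intro j hj
      simp only [mem_range] at hj
      by_cases h2 : n + 1 - j = 1
      · have hb : bnu 1 p = 0 := by simp [bnu]
        rw [h2, hb]; ring
      · have hjk : j < 2*k := by omega
        rw [ih j hjk p]; ring

lemma bnu_key (r : ℕ) (hr : 1 ≤ r) (p : ℝ) :
    (1-p)*(-p)^r + p*(1-p)^r = p * bnu r p := by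
  obtain ⟨s, rfl⟩ : ∃ s, r = s + 1 := ⟨r - 1, by omega⟩
  simp only [bnu, Nat.add_sub_cancel, pow_succ]
  ring

lemma inner_identity (n : ℕ) (p x : ℝ) :
    (1-p)*(x-p)^n + p*(x+(1-p))^n
      = x^n + ∑ j ∈ range n, (n.choose j : ℝ) * (p * bnu (n-j) p) * x^j := by
  have e1 : (x - p)^n = ∑ j ∈ range (n+1), x^j * (-p)^(n-j) * (n.choose j : ℝ) := by
    rw [show x - p = x + (-p) by ring, add_pow]
  have e2 : (x + (1-p))^n = ∑ j ∈ range (n+1), x^j * (1-p)^(n-j) * (n.choose j : ℝ) := by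
    rw [add_pow]
  rw [e1, e2, Finset.mul_sum, Finset.mul_sum, ← Finset.sum_add_distrib,
    Finset.sum_range_succ]
  have hlast : (1-p) * (x^n * (-p)^(n-n) * (n.choose n : ℝ))
      + p * (x^n * (1-p)^(n-n) * (n.choose n : ℝ)) = x^n := by
    simp; ring
  rw [hlast, add_comm]
  congr 1
  apply Finset.sum_congr rfl
  intro j hj
  simp only [mem_range] at hj
  have hk := bnu_key (n - j) (by omega) p
  calc (1-p) * (x^j * (-p)^(n-j) * (n.choose j:ℝ)) + p * (x^j * (1-p)^(n-j) * (n.choose j:ℝ))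
      = ((1-p)*(-p)^(n-j) + p*(1-p)^(n-j)) * x^j * (n.choose j:ℝ) := by ring
    _ = (n.choose j : ℝ) * (p * bnu (n-j) p) * x^j := by rw [hk]; ring

/-- the `n`-th central moment sum of `Bin(d,p)` -/
noncomputable def bM (n d : ℕ) (p : ℝ) : ℝ :=
  ∑ k ∈ range (d+1), (d.choose k : ℝ) * p^k * (1-p)^(d-k) * ((k:ℝ) - (d:ℝ)*p)^n

lemma bM_step (n d : ℕ) (p : ℝ) :
    bM n (d+1) p = bM n d p
      + ∑ j ∈ range n, (n.choose j : ℝ) * (p * bnu (n-j) p) * bM j d p := by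
  have h1 : bM n (d+1) p
      = ∑ k ∈ range (d+1), (d.choose k : ℝ) * p^k * (1-p)^(d-k)
          * ((1-p) * (((k:ℝ) - (d:ℝ)*p) - p)^n + p * (((k:ℝ) - (d:ℝ)*p) + (1-p))^n) := by
    unfold bM
    rw [Finset.sum_range_succ']
    -- the shifted sum: split choose (d+1) (k+1) = choose d k + choose d (k+1)
    have hsplit : ∀ k ∈ range (d+1),
        ((d+1).choose (k+1) : ℝ) * p^(k+1) * (1-p)^(d+1-(k+1)) * (((k+1:ℕ):ℝ) - ((d+1:ℕ):ℝ)*p)^n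
        = (d.choose k : ℝ) * p^(k+1) * (1-p)^(d-k) * (((k:ℝ)+1) - ((d:ℝ)+1)*p)^n
          + (d.choose (k+1) : ℝ) * p^(k+1) * (1-p)^(d-k) * (((k:ℝ)+1) - ((d:ℝ)+1)*p)^n := by
      intro k hk
      have : ((d+1).choose (k+1) : ℝ) = (d.choose k : ℝ) + (d.choose (k+1) : ℝ) := by
        rw [Nat.choose_succ_succ]; push_cast; ring
      rw [this, show d+1-(k+1) = d-k from by omega]
      push_cast
      ring
    rw [Finset.sum_congr rfl hsplit, Finset.sum_add_distrib]
    -- second piece plus the k=0 term reassembles to ∑_{k∈range(d+1)} choose d k * p^k * (1-p)^(d+1-k) * T k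
    have h2 : (∑ k ∈ range (d+1), (d.choose (k+1) : ℝ) * p^(k+1) * (1-p)^(d-k) * (((k:ℝ)+1) - ((d:ℝ)+1)*p)^n)
        + ((d+1).choose 0 : ℝ) * p^0 * (1-p)^(d+1-0) * (((0:ℕ):ℝ) - ((d+1:ℕ):ℝ)*p)^n
        = ∑ k ∈ range (d+1), (d.choose k : ℝ) * p^k * (1-p)^(d+1-k) * ((k:ℝ) - ((d:ℝ)+1)*p)^n := by
      have h3 : ∑ k ∈ range (d+2), (d.choose k : ℝ) * p^k * (1-p)^(d+1-k) * ((k:ℝ) - ((d:ℝ)+1)*p)^n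
          = ∑ k ∈ range (d+1), (d.choose k : ℝ) * p^k * (1-p)^(d+1-k) * ((k:ℝ) - ((d:ℝ)+1)*p)^n := by
        rw [Finset.sum_range_succ, Nat.choose_succ_self]
        simp
      rw [← h3]
      conv_rhs => rw [Finset.sum_range_succ']
      congr 1
      · apply Finset.sum_congr rfl
        intro k hk
        simp only [mem_range] at hk
        rw [show d+1-(k+1) = d-k from by omega]
        push_cast; ring
      · simp
    rw [add_rotate, h2]
    rw [← Finset.sum_add_distrib]
    apply Finset.sum_congr rfl
    intro k hk
    simp only [mem_range] at hk
    rw [show d+1-k = (d-k)+1 from by omega, pow_succ]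
    ring
  rw [h1]
  have hterm : ∀ k ∈ range (d+1),
      (d.choose k : ℝ) * p^k * (1-p)^(d-k)
        * ((1-p) * (((k:ℝ) - (d:ℝ)*p) - p)^n + p * (((k:ℝ) - (d:ℝ)*p) + (1-p))^n)
      = (d.choose k : ℝ) * p^k * (1-p)^(d-k) * ((k:ℝ) - (d:ℝ)*p)^n
        + ∑ j ∈ range n, (n.choose j : ℝ) * (p * bnu (n-j) p)
            * ((d.choose k : ℝ) * p^k * (1-p)^(d-k) * ((k:ℝ) - (d:ℝ)*p)^j) := by
    intro k _
    rw [inner_identity n p ((k:ℝ) - (d:ℝ)*p), mul_add, Finset.mul_sum]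
    congr 1
    apply Finset.sum_congr rfl
    intro j _
    ring
  rw [Finset.sum_congr rfl hterm, Finset.sum_add_distrib]
  congr 1
  rw [Finset.sum_comm]
  apply Finset.sum_congr rfl
  intro j _
  rw [← Finset.mul_sum]
  simp only [bM]

lemma bM_repr (n d : ℕ) (p : ℝ) :
    bM n d p = ∑ k ∈ range (n+1), (d.choose k : ℝ) * p^k * bh n k p := by
  induction d generalizing n with
  | zero =>
    simp only [bM]
    rw [Finset.sum_range_one]
    rw [Finset.sum_range_succ']
    have h0 : ∀ k ∈ range n, ((Nat.choose 0 (k+1) : ℕ) : ℝ) * p^(k+1) * bh n (k+1) p = 0 := by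
      intro k _
      simp [Nat.choose_eq_zero_of_lt]
    rw [Finset.sum_congr rfl h0, Finset.sum_const_zero]
    match n with
    | 0 => simp [bh]
    | (n+1) => simp [bh]
  | succ d ih =>
    rw [bM_step, ih n]
    have hext : ∀ j ∈ range n, (n.choose j : ℝ) * (p * bnu (n-j) p) * bM j d p
        = ∑ k ∈ range (n+1), (n.choose j : ℝ) * (p * bnu (n-j) p)
            * ((d.choose k : ℝ) * p^k * bh j k p) := by
      intro j hj
      have hjr := hj
      simp only [mem_range] at hjr
      have : bM j d p = ∑ k ∈ range (n+1), (d.choose k : ℝ) * p^k * bh j k p := by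
        rw [ih j]
        apply Finset.sum_subset
        · apply Finset.range_subset_range.2; omega
        · intro k _ hk
          simp only [mem_range, not_lt] at hk
          rw [bh_zero_of_lt k j (by omega) p]
          ring
      rw [this, Finset.mul_sum]
    rw [Finset.sum_congr rfl hext, Finset.sum_comm]
    have hswap : ∀ k ∈ range (n+1),
        (∑ j ∈ range n, (n.choose j : ℝ) * (p * bnu (n-j) p)
            * ((d.choose k : ℝ) * p^k * bh j k p))
        = (d.choose k : ℝ) * p^(k+1) * bh n (k+1) p := by
      intro k _
      have hb : bh n (k+1) p = ∑ j ∈ range n, (n.choose j : ℝ) * bnu (n-j) p * bh j k p := by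
        match n with
        | 0 => rfl
        | (n+1) => rfl
      rw [hb, Finset.mul_sum]
      apply Finset.sum_congr rfl
      intro j _
      ring
    rw [Finset.sum_congr rfl hswap]
    -- combine: ∑ C(d,k) p^k bh n k + ∑ C(d,k) p^(k+1) bh n (k+1) = ∑ C(d+1,k) p^k bh n k
    have hdrop : ∑ k ∈ range (n+1), (d.choose k : ℝ) * p^(k+1) * bh n (k+1) p
        = ∑ k ∈ range n, (d.choose k : ℝ) * p^(k+1) * bh n (k+1) p := by
      rw [Finset.sum_range_succ, bh_zero_of_lt (n+1) n (by omega) p]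
      rw [mul_zero, add_zero]
    rw [hdrop]
    conv_lhs => rw [Finset.sum_range_succ']
    conv_rhs => rw [Finset.sum_range_succ']
    have hps : ∀ k ∈ range n,
        (((d+1).choose (k+1) : ℕ) : ℝ) * p^(k+1) * bh n (k+1) p
        = (d.choose k : ℝ) * p^(k+1) * bh n (k+1) p
          + (d.choose (k+1) : ℝ) * p^(k+1) * bh n (k+1) p := by
      intro k _
      rw [Nat.choose_succ_succ d k]
      push_cast
      ring
    rw [Finset.sum_congr rfl hps, Finset.sum_add_distrib]
    simp only [Nat.choose_zero_right, Nat.cast_one, pow_zero]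
    ring

lemma bnu_continuous (r : ℕ) : Continuous (fun p : ℝ => bnu r p) := by
  unfold bnu
  fun_prop

lemma bh_continuous : ∀ (k n : ℕ), Continuous (fun p : ℝ => bh n k p) := by
  intro k
  induction k with
  | zero =>
    intro n
    match n with
    | 0 => exact continuous_const
    | (n+1) => exact continuous_const
  | succ k ih =>
    intro n
    have : (fun p : ℝ => bh n (k+1) p)
        = fun p => ∑ j ∈ range n, (n.choose j : ℝ) * bnu (n-j) p * bh j k p := by
      funext p
      match n with
      | 0 => rfl
      | (n+1) => rfl
    rw [this]
    apply continuous_finset_sum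
    intro j _
    exact (continuous_const.mul (bnu_continuous (n-j))).mul (ih j)

lemma bnu_at_zero (r : ℕ) (hr : 2 ≤ r) : bnu r 0 = 1 := by
  unfold bnu
  obtain ⟨s, rfl⟩ : ∃ s, r = s + 2 := ⟨r - 2, by omega⟩
  norm_num

lemma bh_diag (m : ℕ) :
    bh (2*m) m 0 = (m.factorial : ℝ) * ∏ j ∈ range m, (2*(j:ℝ)+1) := by
  induction m with
  | zero => simp [bh]
  | succ m ih =>
    have hstep : bh (2*(m+1)) (m+1) 0
        = ∑ j ∈ range (2*m+2), ((2*m+2).choose j : ℝ) * bnu (2*m+2-j) 0 * bh j m 0 := by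
      rw [show 2*(m+1) = (2*m+1)+1 from by ring]
      rfl
    rw [hstep]
    rw [Finset.sum_eq_single_of_mem (2*m) (by simp only [mem_range]; omega)]
    · rw [show 2*m+2-2*m = 2 from by omega, bnu_at_zero 2 le_rfl]
      rw [ih]
      have hch : ((2*m+2).choose (2*m) : ℝ) = ((m:ℝ)+1) * (2*(m:ℝ)+1) := by
        rw [show (2*m+2).choose (2*m) = (2*m+2).choose 2 from by
          rw [← Nat.choose_symm (by omega)]; congr 1; omega]
        rw [Nat.choose_two_right]
        have : (2*m+2) * (2*m+2-1) / 2 = (m+1) * (2*m+1) := by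
          have : (2*m+2) * (2*m+2-1) = 2 * ((m+1) * (2*m+1)) := by
            rw [show 2*m+2-1 = 2*m+1 from by omega]; ring
          omega
        rw [this]
        push_cast
        ring
      rw [hch, Finset.prod_range_succ]
      rw [Nat.factorial_succ]
      push_cast
      ring
    · intro j hj hne
      rcases lt_or_gt_of_ne hne with hlt | hgt
      · rw [bh_zero_of_lt m j (by omega) 0]; ring
      · simp only [mem_range] at hj
        have : j = 2*m+1 := by omega
        subst this
        rw [show 2*m+2-(2*m+1) = 1 from by omega, show bnu 1 (0:ℝ) = 0 from by simp [bnu]]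
        ring

lemma choose_div_pow_tendsto (k : ℕ) :
    Tendsto (fun d : ℕ => (d.choose k : ℝ) / (d:ℝ)^k) atTop (nhds ((k.factorial : ℝ))⁻¹) := by
  have heq : ∀ᶠ d : ℕ in atTop,
      (k.factorial : ℝ)⁻¹ * ∏ i ∈ range k, (1 - (i:ℝ)/(d:ℝ))
        = (d.choose k : ℝ) / (d:ℝ)^k := by
    filter_upwards [eventually_ge_atTop (k+1)] with d hd
    have hd0 : (0:ℝ) < (d:ℝ) := by
      have : 0 < d := by omega
      exact_mod_cast this
    have hdesc : ((d.descFactorial k : ℕ) : ℝ) = ∏ i ∈ range k, ((d:ℝ) - (i:ℝ)) := by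
      rw [Nat.descFactorial_eq_prod_range]
      push_cast
      apply Finset.prod_congr rfl
      intro i hi
      simp only [mem_range] at hi
      rw [Nat.cast_sub (by omega)]
    have hfac : ((k.factorial : ℕ):ℝ) * (d.choose k : ℝ) = ∏ i ∈ range k, ((d:ℝ) - (i:ℝ)) := by
      rw [← hdesc, Nat.descFactorial_eq_factorial_mul_choose]
      push_cast; ring
    have hfk : (k.factorial : ℝ) ≠ 0 := by exact_mod_cast k.factorial_ne_zero
    have hchoose : (d.choose k : ℝ) = (k.factorial : ℝ)⁻¹ * ∏ i ∈ range k, ((d:ℝ) - (i:ℝ)) := by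
      rw [← hfac]; field_simp
    rw [hchoose]
    rw [show ((d:ℝ))^k = ∏ i ∈ range k, (d:ℝ) from by rw [Finset.prod_const]; simp]
    rw [mul_div_assoc, ← Finset.prod_div_distrib]
    congr 1
    apply Finset.prod_congr rfl
    intro i _
    field_simp
  apply Tendsto.congr' heq
  have hprod : Tendsto (fun d : ℕ => ∏ i ∈ range k, (1 - (i:ℝ)/(d:ℝ))) atTop
      (nhds (∏ i ∈ range k, (1:ℝ))) := by
    apply tendsto_finset_prod
    intro i _
    have h1 : Tendsto (fun d : ℕ => (i:ℝ)/(d:ℝ)) atTop (nhds 0) :=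
      Tendsto.div_atTop tendsto_const_nhds tendsto_natCast_atTop_atTop
    simpa using tendsto_const_nhds.sub h1
  simpa using tendsto_const_nhds.mul hprod


/-- Central moments of binomial random variables (Lemma A.4): if `B_d ∼ Bin(d, p_d)` with
`p_d → 0` and `d p_d → ∞`, then `E[(B_d - d p_d)^{2m}] / (d p_d)^m → ∏_{j=1}^m (2j-1)`. -/
theorem binomial_central_moment_limit (m : ℕ) (hm : 1 ≤ m)
    (p : ℕ → ℝ) (hp : ∀ d, p d ∈ Set.Ioo (0:ℝ) 1)
    (hp0 : Tendsto p atTop (nhds 0))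
    (hdp : Tendsto (fun d : ℕ => (d:ℝ) * p d) atTop atTop) :
    Tendsto (fun d : ℕ =>
        (∑ k ∈ Finset.range (d+1),
            (d.choose k : ℝ) * p d ^ k * (1 - p d) ^ (d - k) * ((k:ℝ) - (d:ℝ) * p d) ^ (2*m))
          / ((d:ℝ) * p d) ^ m)
      atTop (nhds (∏ j ∈ Finset.range m, (2 * (j:ℝ) + 1))) := by
  have heq : ∀ᶠ d : ℕ in atTop,
      (∑ k ∈ range (m+1), ((d.choose k : ℝ) / (d:ℝ)^k)
          * (((d:ℝ) * p d)⁻¹)^(m-k) * bh (2*m) k (p d))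
      = (∑ k ∈ Finset.range (d+1),
            (d.choose k : ℝ) * p d ^ k * (1 - p d) ^ (d - k) * ((k:ℝ) - (d:ℝ) * p d) ^ (2*m))
          / ((d:ℝ) * p d) ^ m := by
    filter_upwards [eventually_ge_atTop 1] with d hd
    have hM : (∑ k ∈ Finset.range (d+1),
        (d.choose k : ℝ) * p d ^ k * (1 - p d) ^ (d - k) * ((k:ℝ) - (d:ℝ) * p d) ^ (2*m))
        = bM (2*m) d (p d) := rfl
    rw [hM, bM_repr]
    have hsub : ∑ k ∈ range (2*m+1), (d.choose k : ℝ) * (p d)^k * bh (2*m) k (p d)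
        = ∑ k ∈ range (m+1), (d.choose k : ℝ) * (p d)^k * bh (2*m) k (p d) := by
      symm
      apply Finset.sum_subset
      · apply Finset.range_subset_range.2; omega
      · intro k _ hk
        simp only [mem_range, not_lt] at hk
        rw [bh_zero_of_lt k (2*m) (by omega) (p d)]
        ring
    rw [hsub, Finset.sum_div]
    apply Finset.sum_congr rfl
    intro k hk
    simp only [mem_range] at hk
    have hd0 : (0:ℝ) < (d:ℝ) := by exact_mod_cast (by omega : 0 < d)
    have hpd : 0 < p d := (hp d).1
    have hT : (0:ℝ) < (d:ℝ) * p d := by positivity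
    have hTk : ((d:ℝ) * p d)^m = ((d:ℝ) * p d)^(m-k) * ((d:ℝ)^k * (p d)^k) := by
      rw [← mul_pow, ← pow_add]
      congr 1
      omega
    rw [hTk]
    field_simp
    have h1 : (d:ℝ)^(m-k) * ((d:ℝ)⁻¹)^(m-k) = 1 := by
      rw [← mul_pow, mul_inv_cancel₀ hd0.ne', one_pow]
    have h2 : (p d)^(m-k) * ((p d)⁻¹)^(m-k) = 1 := by
      rw [← mul_pow, mul_inv_cancel₀ hpd.ne', one_pow]
    linear_combination ((d.choose k : ℝ) * bh (2*m) k (p d) * ((p d)^(m-k) * ((p d)⁻¹)^(m-k))) * h1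
      + ((d.choose k : ℝ) * bh (2*m) k (p d)) * h2
  apply Tendsto.congr' heq
  have hlim : Tendsto (fun d : ℕ =>
      ∑ k ∈ range (m+1), ((d.choose k : ℝ) / (d:ℝ)^k)
          * (((d:ℝ) * p d)⁻¹)^(m-k) * bh (2*m) k (p d)) atTop
      (nhds (∑ k ∈ range (m+1),
        ((k.factorial : ℝ))⁻¹ * (0:ℝ)^(m-k) * bh (2*m) k 0)) := by
    apply tendsto_finset_sum
    intro k _
    apply Tendsto.mul
    · apply Tendsto.mul
      · exact choose_div_pow_tendsto k
      · exact (hdp.inv_tendsto_atTop).pow (m-k)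
    · exact ((bh_continuous k (2*m)).tendsto 0).comp hp0
  have hval : (∑ k ∈ range (m+1),
        ((k.factorial : ℝ))⁻¹ * (0:ℝ)^(m-k) * bh (2*m) k 0)
      = ∏ j ∈ Finset.range m, (2 * (j:ℝ) + 1) := by
    rw [Finset.sum_eq_single_of_mem m (by simp only [mem_range]; omega)]
    · rw [show m - m = 0 from by omega, pow_zero, bh_diag]
      have hfk : (m.factorial : ℝ) ≠ 0 := by exact_mod_cast m.factorial_ne_zero
      field_simp
    · intro k hk hne
      simp only [mem_range] at hk
      rw [zero_pow (show m - k ≠ 0 from by omega)]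
      ring
  rw [hval] at hlim
  exact hlim
end

section
/- Fix 0 < β < δ < 1/2. For every κ > 0, if X^(d) = (X_1,…,X_d) has independent components each with density f, then: (i) for every sequence of positive integers k_d with ⌊d^β⌋ ≤ k_d ≤ ⌊d^δ⌋, d^κ · P(|b_d^{k_d^{3/4}}(X^(d)) − E[b_d^{k_d^{3/4}}(X^(d))]| > √k_d) → 0 as d → ∞; and (ii) d^κ · P(∃ k with ⌊d^β⌋ ≤ k ≤ ⌊d^δ⌋ such that |b_d^{k^{3/4}}(X^(d)) − E[b_d^{k^{3/4}}(X^(d))]| > √k) → 0 as d → ∞. -/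
open MeasureTheory Filter Finset

noncomputable section

/-- Normalizing constant `∫_0^1 e^{g(y)} dy`. -/
def normConst (g : ℝ → ℝ) : ℝ := ∫ y in (0:ℝ)..1, Real.exp (g y)

/-- The one-dimensional target density `f(x) = e^{g(x)} 1_{(0,1)}(x) / ∫_0^1 e^{g(y)} dy`. -/
def dens (g : ℝ → ℝ) (x : ℝ) : ℝ :=
  if x ∈ Set.Ioo (0:ℝ) 1 then Real.exp (g x) / normConst g else 0

/-- The i.i.d. product target density `π_d(x) = ∏_{i=1}^d f(x_i)`. -/
def targetDens (g : ℝ → ℝ) (d : ℕ) (x : Fin d → ℝ) : ℝ := ∏ i, dens g (x i)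

open scoped Classical in
/-- `b_d^r(x)`: the number of components of `x` in the boundary region
`(0, r/d) ∪ (1 - r/d, 1)`. -/
def bcount (d : ℕ) (r : ℝ) (x : Fin d → ℝ) : ℕ :=
  (Finset.univ.filter fun j : Fin d =>
    x j ∈ Set.Ioo (0:ℝ) (r / (d:ℝ)) ∪ Set.Ioo (1 - r / (d:ℝ)) 1).card

/-- `E[b_d^r(X^{(d)})]` in stationarity. -/
def bMean (g : ℝ → ℝ) (d : ℕ) (r : ℝ) : ℝ :=
  ∫ x : Fin d → ℝ, (bcount d r x : ℝ) * targetDens g d x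

set_option linter.unusedSectionVars false
set_option linter.unusedVariables false

section basics
variable {g : ℝ → ℝ} (hg : ContinuousOn g (Set.Icc 0 1))
include hg

lemma contG : Continuous (fun x : ℝ => g (min 1 (max 0 x))) := by
  apply hg.comp_continuous (by fun_prop)
  intro x
  exact ⟨le_min zero_le_one (le_max_left 0 x), min_le_left _ _⟩

lemma dens_eq_indicator : _root_.dens g =
    (Set.Ioo (0:ℝ) 1).indicator (fun x => Real.exp (g (min 1 (max 0 x))) / normConst g) := by
  funext x
  by_cases hx : x ∈ Set.Ioo (0:ℝ) 1
  · rw [Set.indicator_of_mem hx, _root_.dens, if_pos hx, max_eq_right hx.1.le,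
      min_eq_right hx.2.le]
  · rw [Set.indicator_of_notMem hx, _root_.dens, if_neg hx]

lemma normConst_pos : 0 < normConst g := by
  apply intervalIntegral.intervalIntegral_pos_of_pos_on
  · apply ContinuousOn.intervalIntegrable
    rw [Set.uIcc_of_le (by norm_num : (0:ℝ) ≤ 1)]
    exact (Real.continuous_exp.comp_continuousOn hg)
  · exact fun x _ => Real.exp_pos _
  · norm_num

lemma dens_nonneg (x : ℝ) : 0 ≤ _root_.dens g x := by
  rw [_root_.dens]
  split
  · exact div_nonneg (Real.exp_pos _).le (normConst_pos hg).le
  · exact le_refl _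

lemma dens_measurable : Measurable (_root_.dens g) := by
  rw [dens_eq_indicator hg]
  exact (((Real.continuous_exp.comp (contG hg)).div_const _).measurable).indicator
    measurableSet_Ioo

lemma dens_integrable : Integrable (_root_.dens g) := by
  rw [dens_eq_indicator hg]
  rw [integrable_indicator_iff measurableSet_Ioo]
  exact (((Real.continuous_exp.comp (contG hg)).div_const _).integrableOn_Icc).mono_set
    Set.Ioo_subset_Icc_self

lemma dens_integral_one : ∫ x, _root_.dens g x = 1 := by
  have h1 : ∫ x, _root_.dens g x
      = ∫ x in Set.Ioo (0:ℝ) 1, Real.exp (g (min 1 (max 0 x))) / normConst g := by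
    rw [dens_eq_indicator hg, integral_indicator measurableSet_Ioo]
  rw [h1]
  have h2 : ∀ x ∈ Set.Ioo (0:ℝ) 1,
      Real.exp (g (min 1 (max 0 x))) / normConst g = Real.exp (g x) / normConst g := by
    intro x hx
    rw [max_eq_right hx.1.le, min_eq_right hx.2.le]
  rw [setIntegral_congr_fun measurableSet_Ioo h2]
  have h3 : ∫ x in Set.Ioo (0:ℝ) 1, Real.exp (g x) / normConst g
      = (∫ x in Set.Ioo (0:ℝ) 1, Real.exp (g x)) / normConst g := by
    rw [integral_div]
  rw [h3, ← MeasureTheory.integral_Ioc_eq_integral_Ioo,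
    ← intervalIntegral.integral_of_le (by norm_num : (0:ℝ) ≤ 1)]
  rw [← normConst]
  exact div_self (ne_of_gt (normConst_pos hg))

lemma dens_le_bound : ∃ M : ℝ, 0 < M ∧ ∀ x, _root_.dens g x ≤ M := by
  have hZ := normConst_pos hg
  obtain ⟨x₀, hx₀, hC⟩ := isCompact_Icc.exists_isMaxOn (Set.nonempty_Icc.2 zero_le_one) hg
  refine ⟨Real.exp (g x₀) / normConst g, by positivity, fun x => ?_⟩
  rw [_root_.dens]
  split
  · rename_i hx
    have := hC (Set.Ioo_subset_Icc_self hx)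
    gcongr
    exact this
  · positivity

end basics


def bSet (d : ℕ) (r : ℝ) : Set ℝ := Set.Ioo (0:ℝ) (r / (d:ℝ)) ∪ Set.Ioo (1 - r / (d:ℝ)) 1

lemma measurableSet_bSet (d : ℕ) (r : ℝ) : MeasurableSet (bSet d r) :=
  measurableSet_Ioo.union measurableSet_Ioo

def bProb (g : ℝ → ℝ) (d : ℕ) (r : ℝ) : ℝ := ∫ y in bSet d r, _root_.dens g y

def indB (d : ℕ) (r : ℝ) (y : ℝ) : ℝ := (bSet d r).indicator (fun _ => (1:ℝ)) y

lemma indB_measurable (d : ℕ) (r : ℝ) : Measurable (indB d r) :=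
  measurable_const.indicator (measurableSet_bSet d r)


section main
variable {g : ℝ → ℝ} (hg : ContinuousOn g (Set.Icc 0 1)) (d : ℕ) (r : ℝ)
include hg

lemma bProb_nonneg : 0 ≤ bProb g d r :=
  setIntegral_nonneg (measurableSet_bSet d r) (fun y _ => dens_nonneg hg y)

lemma bProb_le_one : bProb g d r ≤ 1 := by
  rw [bProb, ← dens_integral_one hg]
  exact setIntegral_le_integral (dens_integrable hg) (ae_of_all _ (dens_nonneg hg))

lemma bProb_le (M : ℝ) (hM : ∀ x, _root_.dens g x ≤ M) (hM0 : 0 ≤ M) (hr : 0 ≤ r) :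
    bProb g d r ≤ M * (2 * r / d) := by
  have hrd : 0 ≤ r / (d:ℝ) := div_nonneg hr d.cast_nonneg
  have hvol : volume (bSet d r) ≤ ENNReal.ofReal (2 * (r / d)) := by
    refine (measure_union_le _ _).trans ?_
    have e1 : r / (d:ℝ) - 0 = r / d := by ring
    have e2 : 1 - (1 - r / (d:ℝ)) = r / d := by ring
    rw [Real.volume_Ioo, Real.volume_Ioo, e1, e2, ← ENNReal.ofReal_add hrd hrd]
    exact le_of_eq (by rw [two_mul])
  have h1 : bProb g d r ≤ ∫ _ in bSet d r, M := by
    apply setIntegral_mono_on ((dens_integrable hg).integrableOn)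
      (integrableOn_const (lt_of_le_of_lt hvol ENNReal.ofReal_lt_top).ne)
      (measurableSet_bSet d r) (fun y _ => hM y)
  refine h1.trans ?_
  rw [setIntegral_const]
  calc (volume (bSet d r)).toReal * M ≤ (2 * (r/d)) * M := by
        apply mul_le_mul_of_nonneg_right _ hM0
        exact ENNReal.toReal_le_of_le_ofReal (by positivity) hvol
    _ = M * (2 * r / d) := by ring

-- pointwise identity
omit hg in
lemma exp_indB_mul_dens (t : ℝ) (y : ℝ) :
    Real.exp (t * indB d r y) * _root_.dens g y
      = _root_.dens g y + (Real.exp t - 1) * (bSet d r).indicator (_root_.dens g) y := by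
  by_cases hy : y ∈ bSet d r
  · rw [indB, Set.indicator_of_mem hy, Set.indicator_of_mem hy, mul_one]
    ring
  · rw [indB, Set.indicator_of_notMem hy, Set.indicator_of_notMem hy, mul_zero,
      Real.exp_zero]
    ring

lemma integral_exp_indB (t : ℝ) :
    ∫ y, Real.exp (t * indB d r y) * _root_.dens g y
      = 1 + (Real.exp t - 1) * bProb g d r := by
  simp_rw [exp_indB_mul_dens d r t]
  rw [integral_add (dens_integrable hg)
      (((dens_integrable hg).indicator (measurableSet_bSet d r)).const_mul _),
    integral_const_mul, integral_indicator (measurableSet_bSet d r),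
    dens_integral_one hg]
  rfl

omit hg in
lemma bcount_cast (x : Fin d → ℝ) :
    (bcount d r x : ℝ) = ∑ j, indB d r (x j) := by
  classical
  rw [bcount, Finset.card_filter]
  push_cast
  refine Finset.sum_congr rfl (fun j _ => ?_)
  simp only [indB, bSet, Set.indicator_apply]

omit hg in
lemma bcount_measurable : Measurable (fun x : Fin d → ℝ => (bcount d r x : ℝ)) := by
  simp_rw [bcount_cast]
  exact Finset.measurable_sum _ (fun j _ => (indB_measurable d r).comp (measurable_pi_apply j))

lemma integrable_exp_bcount (t : ℝ) :
    Integrable (fun x : Fin d → ℝ => Real.exp (t * (bcount d r x : ℝ)) * targetDens g d x) := by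
  have : (fun x : Fin d → ℝ => Real.exp (t * (bcount d r x : ℝ)) * targetDens g d x)
      = fun x => ∏ j, (Real.exp (t * indB d r (x j)) * _root_.dens g (x j)) := by
    funext x
    rw [bcount_cast, Finset.mul_sum, Real.exp_sum, targetDens, ← Finset.prod_mul_distrib]
  rw [this]
  apply Integrable.fintype_prod (f := fun (_ : Fin d) y => Real.exp (t * indB d r y) * _root_.dens g y)
  intro _
  simp_rw [exp_indB_mul_dens d r t]
  exact (dens_integrable hg).add
    (((dens_integrable hg).indicator (measurableSet_bSet d r)).const_mul _)

lemma integral_exp_bcount (t : ℝ) :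
    ∫ x : Fin d → ℝ, Real.exp (t * (bcount d r x : ℝ)) * targetDens g d x
      = (1 + (Real.exp t - 1) * bProb g d r) ^ d := by
  have : (fun x : Fin d → ℝ => Real.exp (t * (bcount d r x : ℝ)) * targetDens g d x)
      = fun x => ∏ j, (Real.exp (t * indB d r (x j)) * _root_.dens g (x j)) := by
    funext x
    rw [bcount_cast, Finset.mul_sum, Real.exp_sum, targetDens, ← Finset.prod_mul_distrib]
  rw [this, MeasureTheory.integral_fintype_prod_volume_eq_pow (𝕜 := ℝ) (ι := Fin d)
    (fun y => Real.exp (t * indB d r y) * _root_.dens g y),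
    integral_exp_indB hg d r t, Fintype.card_fin]

lemma targetDens_nonneg (x : Fin d → ℝ) : 0 ≤ targetDens g d x :=
  Finset.prod_nonneg (fun i _ => dens_nonneg hg (x i))

lemma targetDens_integrable : Integrable (targetDens g d) := by
  apply Integrable.fintype_prod (f := fun (_ : Fin d) y => _root_.dens g y)
  exact fun _ => dens_integrable hg

lemma indB_mul_dens_integrable : Integrable (fun y => indB d r y * _root_.dens g y) := by
  have : (fun y => indB d r y * _root_.dens g y) = (bSet d r).indicator (_root_.dens g) := by
    funext y
    by_cases hy : y ∈ bSet d r
    · rw [indB, Set.indicator_of_mem hy, Set.indicator_of_mem hy, one_mul]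
    · rw [indB, Set.indicator_of_notMem hy, Set.indicator_of_notMem hy, zero_mul]
  rw [this]
  exact (dens_integrable hg).indicator (measurableSet_bSet d r)

lemma integral_indB_mul_dens : ∫ y, indB d r y * _root_.dens g y = bProb g d r := by
  have : (fun y => indB d r y * _root_.dens g y) = (bSet d r).indicator (_root_.dens g) := by
    funext y
    by_cases hy : y ∈ bSet d r
    · rw [indB, Set.indicator_of_mem hy, Set.indicator_of_mem hy, one_mul]
    · rw [indB, Set.indicator_of_notMem hy, Set.indicator_of_notMem hy, zero_mul]
  rw [this, integral_indicator (measurableSet_bSet d r)]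
  rfl

lemma bMean_eq : bMean g d r = d * bProb g d r := by
  classical
  rw [bMean]
  have h : (fun x : Fin d → ℝ => (bcount d r x : ℝ) * targetDens g d x)
      = fun x => ∑ j, ∏ i, ((if i = j then indB d r (x i) else 1) * _root_.dens g (x i)) := by
    funext x
    rw [bcount_cast, Finset.sum_mul]
    refine Finset.sum_congr rfl (fun j _ => ?_)
    rw [targetDens, Finset.prod_mul_distrib,
      Finset.prod_ite_eq' Finset.univ j (fun i => indB d r (x i)),
      if_pos (Finset.mem_univ j)]
  rw [h]
  have hint : ∀ j : Fin d, Integrable (fun x : Fin d → ℝ =>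
      ∏ i, ((if i = j then indB d r (x i) else 1) * _root_.dens g (x i))) := by
    intro j
    apply Integrable.fintype_prod
      (f := fun (i : Fin d) y => (if i = j then indB d r y else 1) * _root_.dens g y)
    intro i
    by_cases hij : i = j
    · simp only [hij, if_pos rfl]
      exact indB_mul_dens_integrable hg d r
    · simp only [if_neg hij, one_mul]
      exact dens_integrable hg
  rw [integral_finset_sum _ (fun j _ => hint j)]
  have hterm : ∀ j : Fin d, (∫ x : Fin d → ℝ,
      ∏ i, ((if i = j then indB d r (x i) else 1) * _root_.dens g (x i))) = bProb g d r := by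
    intro j
    rw [MeasureTheory.integral_fintype_prod_volume_eq_prod (𝕜 := ℝ) (ι := Fin d)
      (f := fun (i : Fin d) y => (if i = j then indB d r y else 1) * _root_.dens g y)]
    have : ∀ i : Fin d, (∫ y, (if i = j then indB d r y else 1) * _root_.dens g y)
        = if i = j then bProb g d r else 1 := by
      intro i
      by_cases hij : i = j
      · simp only [hij, if_pos rfl]
        exact integral_indB_mul_dens hg d r
      · simp only [if_neg hij, one_mul]
        exact dens_integral_one hg
    rw [Finset.prod_congr rfl (fun i _ => this i),
      Finset.prod_ite_eq' Finset.univ j (fun _ => bProb g d r), if_pos (Finset.mem_univ j)]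
  rw [Finset.sum_congr rfl (fun j _ => hterm j), Finset.sum_const, Finset.card_univ,
    Fintype.card_fin, nsmul_eq_mul]

lemma markov_bound (t c : ℝ) (hc : 0 < c) (S : Set (Fin d → ℝ)) (hSm : MeasurableSet S)
    (hS : ∀ x ∈ S, c ≤ Real.exp (t * (bcount d r x : ℝ))) :
    ∫ x in S, targetDens g d x ≤ (1/c) * (1 + (Real.exp t - 1) * bProb g d r) ^ d := by
  have h1 : ∫ x in S, targetDens g d x
      ≤ ∫ x in S, (1/c) * (Real.exp (t * (bcount d r x : ℝ)) * targetDens g d x) := by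
    apply setIntegral_mono_on ((targetDens_integrable hg d).integrableOn)
      (((integrable_exp_bcount hg d r t).const_mul _).integrableOn) hSm
    intro x hx
    have h2 := hS x hx
    have h3 := targetDens_nonneg hg d x
    calc targetDens g d x = 1 * targetDens g d x := (one_mul _).symm
      _ ≤ ((1/c) * Real.exp (t * (bcount d r x : ℝ))) * targetDens g d x := by
          apply mul_le_mul_of_nonneg_right _ h3
          rw [one_div, inv_mul_eq_div, le_div_iff₀ hc]
          linarith
      _ = (1/c) * (Real.exp (t * (bcount d r x : ℝ)) * targetDens g d x) := by ring
  refine h1.trans ?_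
  have h4 : ∫ x in S, (1/c) * (Real.exp (t * (bcount d r x : ℝ)) * targetDens g d x)
      ≤ ∫ x : Fin d → ℝ, (1/c) * (Real.exp (t * (bcount d r x : ℝ)) * targetDens g d x) := by
    apply setIntegral_le_integral ((integrable_exp_bcount hg d r t).const_mul _)
    apply ae_of_all
    intro x
    have := targetDens_nonneg hg d x
    positivity
  refine h4.trans ?_
  rw [integral_const_mul, integral_exp_bcount hg d r t]

omit hg in
lemma setIntegral_union_le {α : Type*} [MeasurableSpace α] {μ : Measure α} {f : α → ℝ}
    (hf : Integrable f μ) (h0 : ∀ x, 0 ≤ f x) (A B : Set α)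
    (hA : MeasurableSet A) (hB : MeasurableSet B) :
    ∫ x in A ∪ B, f x ∂μ ≤ (∫ x in A, f x ∂μ) + ∫ x in B, f x ∂μ := by
  rw [show A ∪ B = A ∪ (B \ A) by rw [Set.union_diff_self],
    setIntegral_union (disjoint_sdiff_self_right) (hB.diff hA) hf.integrableOn hf.integrableOn]
  gcongr
  · exact ae_of_all _ h0
  · exact hf.integrableOn
  exact Set.diff_subset

lemma two_sided_bound (a t : ℝ) (ht0 : 0 ≤ t) (ht1 : t ≤ 1) (ha : 0 ≤ a) :
    ∫ x in {x : Fin d → ℝ | |(bcount d r x : ℝ) - bMean g d r| > a}, targetDens g d x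
      ≤ 2 * Real.exp ((d : ℝ) * bProb g d r * t^2 - t * a) := by
  set p := bProb g d r with hp
  have hp0 := bProb_nonneg hg d r
  have hp1 := bProb_le_one hg d r
  set m := bMean g d r with hm
  have hmdp : m = d * p := bMean_eq hg d r
  set Eup : Set (Fin d → ℝ) := {x | m + a < (bcount d r x : ℝ)} with hEup
  set Elo : Set (Fin d → ℝ) := {x | (bcount d r x : ℝ) < m - a} with hElo
  have hEupm : MeasurableSet Eup := measurableSet_lt measurable_const (bcount_measurable d r)
  have hElom : MeasurableSet Elo := measurableSet_lt (bcount_measurable d r) measurable_const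
  have hsub : {x : Fin d → ℝ | |(bcount d r x : ℝ) - m| > a} ⊆ Eup ∪ Elo := by
    intro x hx
    simp only [Set.mem_setOf_eq, gt_iff_lt] at hx
    rcases lt_abs.1 hx with h | h
    · exact Or.inl (by simp only [hEup, Set.mem_setOf_eq]; linarith)
    · exact Or.inr (by simp only [hElo, Set.mem_setOf_eq]; linarith)
  have hmeas : MeasurableSet {x : Fin d → ℝ | |(bcount d r x : ℝ) - m| > a} :=
    measurableSet_lt measurable_const ((bcount_measurable d r).sub measurable_const).abs
  have hmono : ∫ x in {x : Fin d → ℝ | |(bcount d r x : ℝ) - m| > a}, targetDens g d x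
      ≤ ∫ x in Eup ∪ Elo, targetDens g d x := by
    apply setIntegral_mono_set (targetDens_integrable hg d).integrableOn
      (ae_of_all _ (targetDens_nonneg hg d))
    exact HasSubset.Subset.eventuallyLE hsub
  have hunion := setIntegral_union_le (targetDens_integrable hg d) (targetDens_nonneg hg d)
    Eup Elo hEupm hElom
  -- upper tail
  have hup : ∫ x in Eup, targetDens g d x ≤ Real.exp ((d:ℝ) * p * t^2 - t * a) := by
    have h1 : ∀ x ∈ Eup, Real.exp (t * (m + a)) ≤ Real.exp (t * (bcount d r x : ℝ)) := by
      intro x hx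
      exact Real.exp_le_exp.2 (mul_le_mul_of_nonneg_left (le_of_lt hx) ht0)
    have h2 := markov_bound hg d r t _ (Real.exp_pos _) Eup hEupm h1
    refine h2.trans ?_
    have hbase0 : (0:ℝ) ≤ 1 + (Real.exp t - 1) * p := by
      nlinarith [Real.exp_pos t, Real.add_one_le_exp t]
    have hbase : 1 + (Real.exp t - 1) * p ≤ Real.exp ((Real.exp t - 1) * p) := by
      linarith [Real.add_one_le_exp ((Real.exp t - 1) * p)]
    have h3 : (1 + (Real.exp t - 1) * p) ^ d ≤ Real.exp ((d:ℝ) * ((Real.exp t - 1) * p)) := by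
      calc (1 + (Real.exp t - 1) * p) ^ d ≤ (Real.exp ((Real.exp t - 1) * p)) ^ d :=
            pow_le_pow_left₀ hbase0 hbase d
        _ = Real.exp ((d:ℝ) * ((Real.exp t - 1) * p)) := by
            rw [← Real.exp_nat_mul]
    have hexp : Real.exp t - 1 ≤ t + t^2 := by
      have := Real.abs_exp_sub_one_sub_id_le (x := t) (by rw [abs_of_nonneg ht0]; exact ht1)
      have h5 := abs_le.1 this
      linarith [h5.2]
    calc (1/Real.exp (t * (m + a))) * (1 + (Real.exp t - 1) * p) ^ d
        ≤ (1/Real.exp (t * (m + a))) * Real.exp ((d:ℝ) * ((Real.exp t - 1) * p)) := by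
          apply mul_le_mul_of_nonneg_left h3 (by positivity)
      _ = Real.exp ((d:ℝ) * ((Real.exp t - 1) * p) - t * (m + a)) := by
          rw [one_div, ← Real.exp_neg, ← Real.exp_add, add_comm]
          ring_nf
      _ ≤ Real.exp ((d:ℝ) * p * t^2 - t * a) := by
          apply Real.exp_le_exp.2
          have hd0 : (0:ℝ) ≤ (d:ℝ) := Nat.cast_nonneg d
          have : (d:ℝ) * ((Real.exp t - 1) * p) ≤ (d:ℝ) * ((t + t^2) * p) := by
            apply mul_le_mul_of_nonneg_left _ hd0
            exact mul_le_mul_of_nonneg_right hexp hp0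
          rw [hmdp]
          nlinarith [this]
  -- lower tail
  have hlo : ∫ x in Elo, targetDens g d x ≤ Real.exp ((d:ℝ) * p * t^2 - t * a) := by
    have h1 : ∀ x ∈ Elo, Real.exp (-t * (m - a)) ≤ Real.exp (-t * (bcount d r x : ℝ)) := by
      intro x hx
      apply Real.exp_le_exp.2
      have hx' : (bcount d r x : ℝ) < m - a := hx
      nlinarith [hx']
    have h2 := markov_bound hg d r (-t) _ (Real.exp_pos _) Elo hElom h1
    refine h2.trans ?_
    have hbase0 : (0:ℝ) ≤ 1 + (Real.exp (-t) - 1) * p := by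
      have hle : Real.exp (-t) - 1 ≤ 0 := by
        have h6 : Real.exp (-t) ≤ 1 := by
          rw [← Real.exp_zero]
          exact Real.exp_le_exp.2 (by linarith)
        linarith
      nlinarith [Real.exp_pos (-t), hp1, hle]
    have hbase : 1 + (Real.exp (-t) - 1) * p ≤ Real.exp ((Real.exp (-t) - 1) * p) := by
      linarith [Real.add_one_le_exp ((Real.exp (-t) - 1) * p)]
    have h3 : (1 + (Real.exp (-t) - 1) * p) ^ d
        ≤ Real.exp ((d:ℝ) * ((Real.exp (-t) - 1) * p)) := by
      calc (1 + (Real.exp (-t) - 1) * p) ^ d ≤ (Real.exp ((Real.exp (-t) - 1) * p)) ^ d :=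
            pow_le_pow_left₀ hbase0 hbase d
        _ = _ := by rw [← Real.exp_nat_mul]
    have hexp : Real.exp (-t) - 1 + t ≤ t^2 := by
      have := Real.abs_exp_sub_one_sub_id_le (x := -t) (by rw [abs_neg, abs_of_nonneg ht0]; exact ht1)
      have h5 := abs_le.1 this
      nlinarith [h5.2]
    calc (1/Real.exp (-t * (m - a))) * (1 + (Real.exp (-t) - 1) * p) ^ d
        ≤ (1/Real.exp (-t * (m - a))) * Real.exp ((d:ℝ) * ((Real.exp (-t) - 1) * p)) := by
          apply mul_le_mul_of_nonneg_left h3 (by positivity)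
      _ = Real.exp ((d:ℝ) * ((Real.exp (-t) - 1) * p) + t * (m - a)) := by
          rw [one_div, ← Real.exp_neg, ← Real.exp_add]
          ring_nf
      _ ≤ Real.exp ((d:ℝ) * p * t^2 - t * a) := by
          apply Real.exp_le_exp.2
          have hd0 : (0:ℝ) ≤ (d:ℝ) := Nat.cast_nonneg d
          have : (d:ℝ) * ((Real.exp (-t) - 1) * p) ≤ (d:ℝ) * ((t^2 - t) * p) := by
            apply mul_le_mul_of_nonneg_left _ hd0
            exact mul_le_mul_of_nonneg_right (by linarith) hp0
          rw [hmdp]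
          nlinarith [this]
  calc ∫ x in {x : Fin d → ℝ | |(bcount d r x : ℝ) - m| > a}, targetDens g d x
      ≤ ∫ x in Eup ∪ Elo, targetDens g d x := hmono
    _ ≤ (∫ x in Eup, targetDens g d x) + ∫ x in Elo, targetDens g d x := hunion
    _ ≤ 2 * Real.exp ((d:ℝ) * p * t^2 - t * a) := by linarith [hup, hlo]


end main

-- limit lemma
lemma tendsto_rpow_mul_exp_neg (A c s : ℝ) (hc : 0 < c) (hs : 0 < s) :
    Tendsto (fun d : ℕ => (d:ℝ) ^ A * Real.exp (-c * (d:ℝ) ^ s)) atTop (nhds 0) := by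
  have hreal : Tendsto (fun x : ℝ => x ^ A * Real.exp (-c * x ^ s)) atTop (nhds 0) := by
    have hlog : Tendsto (fun x : ℝ => A * (Real.log x / x ^ s) - c) atTop (nhds (0 * A - c)) := by
      have h1 : Tendsto (fun x : ℝ => Real.log x / x ^ s) atTop (nhds 0) :=
        (isLittleO_log_rpow_atTop hs).tendsto_div_nhds_zero
      have := (h1.const_mul A).sub_const c
      simpa [mul_comm] using this
    have h2 : Tendsto (fun x : ℝ => x ^ s * (A * (Real.log x / x ^ s) - c)) atTop atBot := by
      exact Filter.Tendsto.atTop_mul_neg (by nlinarith) (tendsto_rpow_atTop hs) hlog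
    have h3 : Tendsto (fun x : ℝ => Real.exp (x ^ s * (A * (Real.log x / x ^ s) - c)))
        atTop (nhds 0) := Real.tendsto_exp_atBot.comp h2
    apply h3.congr'
    filter_upwards [eventually_ge_atTop (1:ℝ)] with x hx
    have hx0 : 0 < x := lt_of_lt_of_le zero_lt_one hx
    have hxs : x ^ s ≠ 0 := ne_of_gt (Real.rpow_pos_of_pos hx0 s)
    rw [Real.rpow_def_of_pos hx0 A, ← Real.exp_add]
    congr 1
    field_simp
    ring
  exact hreal.comp tendsto_natCast_atTop_atTop


-- finite-union subadditivity
lemma setIntegral_biUnion_finset_le {α : Type*} [MeasurableSpace α] {μ : Measure α} {f : α → ℝ}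
    (hf : Integrable f μ) (h0 : ∀ x, 0 ≤ f x) {ι : Type*} (s : Finset ι) (E : ι → Set α)
    (hE : ∀ i, MeasurableSet (E i)) :
    ∫ x in ⋃ i ∈ s, E i, f x ∂μ ≤ ∑ i ∈ s, ∫ x in E i, f x ∂μ := by
  classical
  induction s using Finset.induction with
  | empty => simp
  | insert a s hnot ih =>
    rw [Finset.set_biUnion_insert, Finset.sum_insert hnot]
    calc ∫ x in E a ∪ ⋃ i ∈ s, E i, f x ∂μ
        ≤ (∫ x in E a, f x ∂μ) + ∫ x in ⋃ i ∈ s, E i, f x ∂μ := by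
          apply setIntegral_union_le hf h0 _ _ (hE a)
          exact MeasurableSet.biUnion s.countable_toSet (fun i _ => hE i)
      _ ≤ _ := add_le_add_right ih _


section final
variable {g : ℝ → ℝ} (hg : ContinuousOn g (Set.Icc 0 1))
include hg

lemma tail_final (M : ℝ) (hM0 : 0 < M) (hM : ∀ x, dens g x ≤ M)
    (d k : ℕ) (hd : 1 ≤ d) (hk : 1 ≤ k) :
    ∫ x in {x : Fin d → ℝ |
        |(bcount d ((k:ℝ) ^ ((3:ℝ)/4)) x : ℝ) - bMean g d ((k:ℝ) ^ ((3:ℝ)/4))|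
          > Real.sqrt k}, targetDens g d x
      ≤ 2 * Real.exp (-(1/(8*M+8)) * (k:ℝ) ^ ((1:ℝ)/4)) := by
  set ε : ℝ := 1/(4*M+4) with hε
  have hε0 : 0 < ε := by rw [hε]; positivity
  have hε1 : ε ≤ 1 := by
    rw [hε, div_le_one (by linarith)]
    linarith
  have hk0 : (0:ℝ) < (k:ℝ) := by exact_mod_cast hk
  have hk1 : (1:ℝ) ≤ (k:ℝ) := by exact_mod_cast hk
  have hd0 : (0:ℝ) < (d:ℝ) := by exact_mod_cast hd
  set t : ℝ := ε * (k:ℝ) ^ (-(1:ℝ)/4) with htdef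
  set rk : ℝ := (k:ℝ) ^ ((3:ℝ)/4) with hrk
  have hrk0 : 0 ≤ rk := (Real.rpow_pos_of_pos hk0 _).le
  have ht0 : 0 ≤ t := by
    have := (Real.rpow_pos_of_pos hk0 (-(1:ℝ)/4)).le
    positivity
  have ht1 : t ≤ 1 := by
    rw [htdef]
    have h1 : (k:ℝ) ^ (-(1:ℝ)/4) ≤ 1 :=
      Real.rpow_le_one_of_one_le_of_nonpos hk1 (by norm_num)
    calc ε * (k:ℝ) ^ (-(1:ℝ)/4) ≤ 1 * 1 :=
          mul_le_mul hε1 h1 (Real.rpow_pos_of_pos hk0 _).le zero_le_one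
      _ = 1 := one_mul 1
  have key := two_sided_bound hg d rk (Real.sqrt k) t ht0 ht1 (Real.sqrt_nonneg _)
  refine key.trans ?_
  have hK4 : (0:ℝ) ≤ (k:ℝ) ^ ((1:ℝ)/4) := (Real.rpow_pos_of_pos hk0 _).le
  -- algebraic identities
  have hsq : t^2 = ε^2 * (k:ℝ) ^ (-(1:ℝ)/2) := by
    rw [htdef, mul_pow]
    congr 1
    rw [← Real.rpow_natCast ((k:ℝ) ^ (-(1:ℝ)/4)) 2, ← Real.rpow_mul hk0.le]
    norm_num
  have hrkt : rk * t^2 = ε^2 * (k:ℝ) ^ ((1:ℝ)/4) := by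
    rw [hsq, hrk, ← mul_assoc, mul_comm ((k:ℝ) ^ ((3:ℝ)/4)) (ε^2), mul_assoc,
      ← Real.rpow_add hk0]
    norm_num
  have hta : t * Real.sqrt k = ε * (k:ℝ) ^ ((1:ℝ)/4) := by
    rw [htdef, Real.sqrt_eq_rpow, mul_assoc, ← Real.rpow_add hk0]
    norm_num
  -- mean bound
  have hdp : (d:ℝ) * bProb g d rk ≤ 2 * M * rk := by
    have h1 := bProb_le hg d rk M hM hM0.le hrk0
    calc (d:ℝ) * bProb g d rk ≤ (d:ℝ) * (M * (2 * rk / d)) := by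
          apply mul_le_mul_of_nonneg_left h1 hd0.le
      _ = 2 * M * rk := by field_simp
  -- exponent bound
  have hexp : (d:ℝ) * bProb g d rk * t^2 - t * Real.sqrt k
      ≤ -(1/(8*M+8)) * (k:ℝ) ^ ((1:ℝ)/4) := by
    have h1 : (d:ℝ) * bProb g d rk * t^2 ≤ 2 * M * (ε^2 * (k:ℝ) ^ ((1:ℝ)/4)) := by
      calc (d:ℝ) * bProb g d rk * t^2 ≤ (2 * M * rk) * t^2 := by
            apply mul_le_mul_of_nonneg_right hdp (sq_nonneg t)
        _ = 2 * M * (rk * t^2) := by ring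
        _ = 2 * M * (ε^2 * (k:ℝ) ^ ((1:ℝ)/4)) := by rw [hrkt]
    rw [hta]
    have hMε : 2 * M * ε ≤ 1/2 := by
      rw [hε, mul_one_div, div_le_div_iff₀ (by linarith) (by norm_num)]
      linarith
    have hhalf : ε / 2 = 1/(8*M+8) := by
      rw [hε]
      field_simp
      ring
    rw [← hhalf]
    have hεK : 0 ≤ ε * ((k:ℝ) ^ ((1:ℝ)/4)) := mul_nonneg hε0.le hK4
    nlinarith [h1, mul_le_mul_of_nonneg_right hMε hεK]
  calc 2 * Real.exp ((d:ℝ) * bProb g d rk * t^2 - t * Real.sqrt k)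
      ≤ 2 * Real.exp (-(1/(8*M+8)) * (k:ℝ) ^ ((1:ℝ)/4)) := by
        have := Real.exp_le_exp.2 hexp
        linarith
    _ = _ := rfl

end final

def Eset (g : ℝ → ℝ) (d k : ℕ) : Set (Fin d → ℝ) :=
  {x : Fin d → ℝ |
    |(bcount d ((k:ℝ) ^ ((3:ℝ)/4)) x : ℝ) - bMean g d ((k:ℝ) ^ ((3:ℝ)/4))|
      > Real.sqrt k}

lemma kpow_bound (β : ℝ) (d k : ℕ) (h2 : (2:ℝ) ≤ (d:ℝ) ^ β)
    (hk : Nat.floor ((d:ℝ) ^ β) ≤ k) :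
    (d:ℝ) ^ (β/4) / 2 ≤ (k:ℝ) ^ ((1:ℝ)/4) ∧ 1 ≤ k := by
  have hfl : (d:ℝ) ^ β - 1 < (Nat.floor ((d:ℝ) ^ β) : ℝ) := Nat.sub_one_lt_floor _
  have hk1 : 1 ≤ k := le_trans (Nat.le_floor (by push_cast; linarith)) hk
  have hkc : ((Nat.floor ((d:ℝ) ^ β) : ℝ)) ≤ (k:ℝ) := Nat.cast_le.2 hk
  have hk' : (d:ℝ) ^ β / 2 ≤ (k:ℝ) := by linarith
  have h0 : (0:ℝ) ≤ (d:ℝ) ^ β / 2 := by linarith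
  have h1 : ((d:ℝ) ^ β / 2) ^ ((1:ℝ)/4) ≤ (k:ℝ) ^ ((1:ℝ)/4) :=
    Real.rpow_le_rpow h0 hk' (by norm_num)
  refine ⟨?_, hk1⟩
  refine le_trans ?_ h1
  rw [Real.div_rpow (by linarith) (by norm_num)]
  have e1 : ((d:ℝ) ^ β) ^ ((1:ℝ)/4) = (d:ℝ) ^ (β/4) := by
    rw [← Real.rpow_mul (Nat.cast_nonneg d)]
    congr 1
    ring
  rw [e1]
  have h24 : (2:ℝ) ^ ((1:ℝ)/4) ≤ 2 := by
    calc (2:ℝ) ^ ((1:ℝ)/4) ≤ (2:ℝ) ^ (1:ℝ) :=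
          Real.rpow_le_rpow_of_exponent_le one_le_two (by norm_num)
      _ = 2 := Real.rpow_one 2
  have hd4 : (0:ℝ) ≤ (d:ℝ) ^ (β/4) := Real.rpow_nonneg (Nat.cast_nonneg d) _
  gcongr

/-- Lemma A.5: for `0 < β < δ < 1/2` and any `κ > 0`, in stationarity:
(i) for every sequence `⌊d^β⌋ ≤ k_d ≤ ⌊d^δ⌋`,
`d^κ P(|b_d^{k_d^{3/4}}(X) - E b_d^{k_d^{3/4}}(X)| > √k_d) → 0`; and
(ii) `d^κ P(∃ k, ⌊d^β⌋ ≤ k ≤ ⌊d^δ⌋, |b_d^{k^{3/4}}(X) - E b_d^{k^{3/4}}(X)| > √k) → 0`. -/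
theorem boundary_count_concentration (g : ℝ → ℝ)
    (hg : ContDiffOn ℝ 2 g (Set.Icc 0 1))
    (β δ : ℝ) (hβ : 0 < β) (hβδ : β < δ) (hδ : δ < 1/2)
    (κ : ℝ) (hκ : 0 < κ) :
    (∀ k : ℕ → ℕ,
      (∀ d : ℕ, Nat.floor ((d:ℝ) ^ β) ≤ k d ∧ k d ≤ Nat.floor ((d:ℝ) ^ δ)) →
      Tendsto (fun d : ℕ =>
          (d:ℝ) ^ κ *
            ∫ x in {x : Fin d → ℝ |
                |(bcount d ((k d : ℝ) ^ ((3:ℝ)/4)) x : ℝ)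
                  - bMean g d ((k d : ℝ) ^ ((3:ℝ)/4))| > Real.sqrt (k d)},
              targetDens g d x)
        atTop (nhds 0)) ∧
    Tendsto (fun d : ℕ =>
        (d:ℝ) ^ κ *
          ∫ x in {x : Fin d → ℝ | ∃ k : ℕ,
              Nat.floor ((d:ℝ) ^ β) ≤ k ∧ k ≤ Nat.floor ((d:ℝ) ^ δ) ∧
              |(bcount d ((k : ℝ) ^ ((3:ℝ)/4)) x : ℝ)
                - bMean g d ((k : ℝ) ^ ((3:ℝ)/4))| > Real.sqrt k},
            targetDens g d x)
      atTop (nhds 0) := by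
  have hg' : ContinuousOn g (Set.Icc 0 1) := hg.continuousOn
  obtain ⟨M, hM0, hM⟩ := dens_le_bound hg'
  set c : ℝ := 1/(8*M+8) with hc
  have hc0 : 0 < c := by rw [hc]; positivity
  -- the basic measurable tail set
  have hrw : ∀ d k : ℕ, {x : Fin d → ℝ |
      |(bcount d ((k:ℝ) ^ ((3:ℝ)/4)) x : ℝ) - bMean g d ((k:ℝ) ^ ((3:ℝ)/4))|
        > Real.sqrt k} = Eset g d k := fun _ _ => rfl
  have hEmeas : ∀ d k, MeasurableSet (Eset g d k) := by
    intro d k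
    exact measurableSet_lt measurable_const
      ((bcount_measurable d _).sub measurable_const).abs
  have hEnonneg : ∀ d k, 0 ≤ ∫ x in Eset g d k, targetDens g d x := by
    intro d k
    exact setIntegral_nonneg (hEmeas d k) (fun x _ => targetDens_nonneg hg' d x)
  -- eventual facts
  have hev : ∀ᶠ d : ℕ in atTop, 1 ≤ d ∧ (2:ℝ) ≤ (d:ℝ) ^ β ∧ (1:ℝ) ≤ (d:ℝ) ^ δ := by
    have hβ' : Tendsto (fun d : ℕ => (d:ℝ) ^ β) atTop atTop :=
      (tendsto_rpow_atTop hβ).comp tendsto_natCast_atTop_atTop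
    have hδ' : Tendsto (fun d : ℕ => (d:ℝ) ^ δ) atTop atTop :=
      (tendsto_rpow_atTop (by linarith)).comp tendsto_natCast_atTop_atTop
    filter_upwards [eventually_ge_atTop 1, hβ'.eventually_ge_atTop 2,
      hδ'.eventually_ge_atTop 1] with d h1 h2 h3
    exact ⟨h1, h2, h3⟩
  -- uniform tail bound
  have hEtail : ∀ d k : ℕ, 1 ≤ d → (2:ℝ) ≤ (d:ℝ) ^ β → Nat.floor ((d:ℝ) ^ β) ≤ k →
      ∫ x in Eset g d k, targetDens g d x ≤ 2 * Real.exp (-(c/2) * (d:ℝ) ^ (β/4)) := by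
    intro d k hd h2 hk
    obtain ⟨hpow, hk1⟩ := kpow_bound β d k h2 hk
    refine (tail_final hg' M hM0 hM d k hd hk1).trans ?_
    have : -c * (k:ℝ) ^ ((1:ℝ)/4) ≤ -(c/2) * (d:ℝ) ^ (β/4) := by
      have h3 : c * ((d:ℝ) ^ (β/4) / 2) ≤ c * (k:ℝ) ^ ((1:ℝ)/4) :=
        mul_le_mul_of_nonneg_left hpow hc0.le
      nlinarith
    have := Real.exp_le_exp.2 this
    rw [hc] at this ⊢
    linarith [this]
  constructor
  · -- part (i)
    intro k hk
    apply squeeze_zero'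
    · filter_upwards with d
      have := hEnonneg d (k d)
      positivity
    · filter_upwards [hev] with d ⟨hd1, hd2, _⟩
      calc (d:ℝ) ^ κ * ∫ x in Eset g d (k d), targetDens g d x
          ≤ (d:ℝ) ^ κ * (2 * Real.exp (-(c/2) * (d:ℝ) ^ (β/4))) := by
            apply mul_le_mul_of_nonneg_left
              (hEtail d (k d) hd1 hd2 (hk d).1)
              (Real.rpow_nonneg (Nat.cast_nonneg d) κ)
        _ = 2 * ((d:ℝ) ^ κ * Real.exp (-(c/2) * (d:ℝ) ^ (β/4))) := by ring
    · have := (tendsto_rpow_mul_exp_neg κ (c/2) (β/4) (by positivity) (by positivity)).const_mul 2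
      simpa using this
  · -- part (ii)
    apply squeeze_zero'
    · filter_upwards with d
      have h0 : 0 ≤ ∫ x in {x : Fin d → ℝ | ∃ k : ℕ,
          Nat.floor ((d:ℝ) ^ β) ≤ k ∧ k ≤ Nat.floor ((d:ℝ) ^ δ) ∧
          |(bcount d ((k : ℝ) ^ ((3:ℝ)/4)) x : ℝ)
            - bMean g d ((k : ℝ) ^ ((3:ℝ)/4))| > Real.sqrt k}, targetDens g d x := by
        apply setIntegral_nonneg _ (fun x _ => targetDens_nonneg hg' d x)
        have : {x : Fin d → ℝ | ∃ k : ℕ,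
            Nat.floor ((d:ℝ) ^ β) ≤ k ∧ k ≤ Nat.floor ((d:ℝ) ^ δ) ∧
            |(bcount d ((k : ℝ) ^ ((3:ℝ)/4)) x : ℝ)
              - bMean g d ((k : ℝ) ^ ((3:ℝ)/4))| > Real.sqrt k}
            = ⋃ j ∈ Finset.Icc (Nat.floor ((d:ℝ) ^ β)) (Nat.floor ((d:ℝ) ^ δ)), Eset g d j := by
          ext x
          simp only [Set.mem_setOf_eq, Set.mem_iUnion, Finset.mem_Icc, exists_prop, Eset, Set.mem_setOf_eq]
          constructor
          · rintro ⟨j, h1, h2, h3⟩; exact ⟨j, ⟨h1, h2⟩, h3⟩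
          · rintro ⟨j, ⟨h1, h2⟩, h3⟩; exact ⟨j, h1, h2, h3⟩
        rw [this]
        exact MeasurableSet.biUnion (Finset.countable_toSet _) (fun j _ => hEmeas d j)
      positivity
    · filter_upwards [hev] with d ⟨hd1, hd2, hd3⟩
      have hUeq : {x : Fin d → ℝ | ∃ k : ℕ,
          Nat.floor ((d:ℝ) ^ β) ≤ k ∧ k ≤ Nat.floor ((d:ℝ) ^ δ) ∧
          |(bcount d ((k : ℝ) ^ ((3:ℝ)/4)) x : ℝ)
            - bMean g d ((k : ℝ) ^ ((3:ℝ)/4))| > Real.sqrt k}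
          = ⋃ j ∈ Finset.Icc (Nat.floor ((d:ℝ) ^ β)) (Nat.floor ((d:ℝ) ^ δ)), Eset g d j := by
        ext x
        simp only [Set.mem_setOf_eq, Set.mem_iUnion, Finset.mem_Icc, exists_prop, Eset, Set.mem_setOf_eq]
        constructor
        · rintro ⟨j, h1, h2, h3⟩; exact ⟨j, ⟨h1, h2⟩, h3⟩
        · rintro ⟨j, ⟨h1, h2⟩, h3⟩; exact ⟨j, h1, h2, h3⟩
      have hstep : ∫ x in {x : Fin d → ℝ | ∃ k : ℕ,
          Nat.floor ((d:ℝ) ^ β) ≤ k ∧ k ≤ Nat.floor ((d:ℝ) ^ δ) ∧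
          |(bcount d ((k : ℝ) ^ ((3:ℝ)/4)) x : ℝ)
            - bMean g d ((k : ℝ) ^ ((3:ℝ)/4))| > Real.sqrt k}, targetDens g d x
          ≤ 2 * (d:ℝ) ^ δ * (2 * Real.exp (-(c/2) * (d:ℝ) ^ (β/4))) := by
        rw [hUeq]
        refine (setIntegral_biUnion_finset_le (targetDens_integrable hg' d)
          (targetDens_nonneg hg' d) _ _ (fun j => hEmeas d j)).trans ?_
        have hsum : ∑ j ∈ Finset.Icc (Nat.floor ((d:ℝ) ^ β)) (Nat.floor ((d:ℝ) ^ δ)),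
            (∫ x in Eset g d j, targetDens g d x)
            ≤ ∑ _j ∈ Finset.Icc (Nat.floor ((d:ℝ) ^ β)) (Nat.floor ((d:ℝ) ^ δ)),
              (2 * Real.exp (-(c/2) * (d:ℝ) ^ (β/4))) := by
          apply Finset.sum_le_sum
          intro j hj
          exact hEtail d j hd1 hd2 (Finset.mem_Icc.1 hj).1
        refine hsum.trans ?_
        rw [Finset.sum_const, nsmul_eq_mul]
        have hcard : ((Finset.Icc (Nat.floor ((d:ℝ) ^ β)) (Nat.floor ((d:ℝ) ^ δ))).card : ℝ)
            ≤ 2 * (d:ℝ) ^ δ := by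
          rw [Nat.card_Icc]
          have h1 : (Nat.floor ((d:ℝ) ^ δ) + 1 - Nat.floor ((d:ℝ) ^ β) : ℕ)
              ≤ Nat.floor ((d:ℝ) ^ δ) + 1 := Nat.sub_le _ _
          have h2 : ((Nat.floor ((d:ℝ) ^ δ) : ℝ)) ≤ (d:ℝ) ^ δ :=
            Nat.floor_le (by positivity)
          calc ((Nat.floor ((d:ℝ) ^ δ) + 1 - Nat.floor ((d:ℝ) ^ β) : ℕ) : ℝ)
              ≤ ((Nat.floor ((d:ℝ) ^ δ) + 1 : ℕ) : ℝ) := Nat.cast_le.2 h1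
            _ = (Nat.floor ((d:ℝ) ^ δ) : ℝ) + 1 := by push_cast; ring
            _ ≤ (d:ℝ) ^ δ + (d:ℝ) ^ δ := by linarith
            _ = 2 * (d:ℝ) ^ δ := by ring
        have hexp0 : (0:ℝ) ≤ 2 * Real.exp (-(c/2) * (d:ℝ) ^ (β/4)) := by positivity
        exact mul_le_mul_of_nonneg_right hcard hexp0
      calc (d:ℝ) ^ κ * ∫ x in {x : Fin d → ℝ | ∃ k : ℕ,
            Nat.floor ((d:ℝ) ^ β) ≤ k ∧ k ≤ Nat.floor ((d:ℝ) ^ δ) ∧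
            |(bcount d ((k : ℝ) ^ ((3:ℝ)/4)) x : ℝ)
              - bMean g d ((k : ℝ) ^ ((3:ℝ)/4))| > Real.sqrt k}, targetDens g d x
          ≤ (d:ℝ) ^ κ * (2 * (d:ℝ) ^ δ * (2 * Real.exp (-(c/2) * (d:ℝ) ^ (β/4)))) :=
            mul_le_mul_of_nonneg_left hstep (Real.rpow_nonneg (Nat.cast_nonneg d) κ)
        _ = 4 * ((d:ℝ) ^ (κ + δ) * Real.exp (-(c/2) * (d:ℝ) ^ (β/4))) := by
            have hd0 : (0:ℝ) < (d:ℝ) := by exact_mod_cast hd1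
            rw [Real.rpow_add hd0]
            ring
    · have := (tendsto_rpow_mul_exp_neg (κ + δ) (c/2) (β/4)
        (by positivity) (by positivity)).const_mul 4
      simpa using this
end
end

section
/- For each d ≥ 1 and x ∈ [0,1]^d define D_d(x) = E[ (∏_{j=1}^d 1{0 < x_j + σ_d Z_j < 1}) · (1 − min{1, exp(∑_{j=1}^d (g(x_j + σ_d Z_j) − g(x_j)))}) ], where Z_1,…,Z_d are i.i.d. uniform on (−1,1). Then for every α < 1/2, d^α · sup_{x ∈ [0,1]^d} D_d(x) → 0 as d → ∞. (D_d(x) is the probability that one step of the random-walk Metropolis chain and one step of the random walk on the hypercube, coupled with common proposal increment and common uniform acceptance variable, disagree when both start at x.) -/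
open MeasureTheory Filter Finset
open scoped ENNReal NNReal

noncomputable section

/-- `D_d(x)`: the probability that one step of the random-walk Metropolis chain for the target
`∝ exp(∑ g(x_j)) 1_{[0,1]^d}` and one step of the random walk on the hypercube, coupled with a
common proposal increment `(l/d) Z` (`Z` uniform on `(-1,1)^d`) and a common uniform acceptance
variable, disagree when both start at `x`. -/
def coupleFail (g : ℝ → ℝ) (l : ℝ) (d : ℕ) (x : Fin d → ℝ) : ℝ :=
  ∫ z in Set.univ.pi (fun _ : Fin d => Set.Ioo (-1:ℝ) 1),
    ((2:ℝ)⁻¹) ^ d *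
      ((∏ j, Set.indicator (Set.Ioo (0:ℝ) 1) (fun _ => (1:ℝ)) (x j + (l / (d:ℝ)) * z j)) *
        (1 - min 1 (Real.exp (∑ j, (g (x j + (l / (d:ℝ)) * z j) - g (x j))))))

/-! ### clamp lemmas -/

lemma clamp_mem (t : ℝ) : max 0 (min 1 t) ∈ Set.Icc (0:ℝ) 1 :=
  ⟨le_max_left _ _, max_le zero_le_one (min_le_left _ _)⟩

lemma clamp_eq {t : ℝ} (ht : t ∈ Set.Icc (0:ℝ) 1) : max 0 (min 1 t) = t := by
  rw [min_eq_right ht.2, max_eq_right ht.1]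

lemma clamp_lip (a b : ℝ) : |max 0 (min 1 a) - max 0 (min 1 b)| ≤ |a - b| := by
  calc |max 0 (min 1 a) - max 0 (min 1 b)| = |min 1 a ⊔ 0 - min 1 b ⊔ 0| := by
        rw [max_comm (0:ℝ), max_comm (0:ℝ)]
    _ ≤ |min 1 a - min 1 b| := abs_max_sub_max_le_abs _ _ _
    _ = |a ⊓ 1 - b ⊓ 1| := by rw [min_comm (1:ℝ), min_comm (1:ℝ)]
    _ ≤ |a - b| := abs_inf_sub_inf_le_abs _ _ _

/-! ### Taylor bounds -/

lemma taylor_bound {g : ℝ → ℝ} (hg : ContDiffOn ℝ 2 g (Set.Icc 0 1)) :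
    ∃ M1 M2 : ℝ, 0 ≤ M1 ∧ 0 ≤ M2 ∧
      (∀ u ∈ Set.Icc (0:ℝ) 1, |derivWithin g (Set.Icc 0 1) u| ≤ M1) ∧
      (∀ u ∈ Set.Icc (0:ℝ) 1, ∀ v ∈ Set.Icc (0:ℝ) 1, |g v - g u| ≤ M1 * |v - u|) ∧
      (∀ σ : ℝ, 0 ≤ σ → ∀ u ∈ Set.Icc (0:ℝ) 1, ∀ v ∈ Set.Icc (0:ℝ) 1, |v - u| ≤ σ →
        |g v - g u - derivWithin g (Set.Icc 0 1) u * (v - u)| ≤ M2 * σ * |v - u|) := by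
  have hs : UniqueDiffOn ℝ (Set.Icc (0:ℝ) 1) := uniqueDiffOn_Icc one_pos
  set g1 := derivWithin g (Set.Icc (0:ℝ) 1) with hg1def
  have hg1 : ContDiffOn ℝ 1 g1 (Set.Icc 0 1) := hg.derivWithin hs (by norm_num)
  obtain ⟨M1, hM1⟩ := isCompact_Icc.exists_bound_of_continuousOn hg1.continuousOn
  obtain ⟨M2, hM2⟩ :=
    isCompact_Icc.exists_bound_of_continuousOn (hg1.continuousOn_derivWithin hs le_rfl)
  have hdiffg : DifferentiableOn ℝ g (Set.Icc 0 1) := hg.differentiableOn (by norm_num)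
  have hdiffg1 : DifferentiableOn ℝ g1 (Set.Icc 0 1) := hg1.differentiableOn one_ne_zero
  have hlip1 : ∀ u ∈ Set.Icc (0:ℝ) 1, ∀ v ∈ Set.Icc (0:ℝ) 1,
      |g1 v - g1 u| ≤ (max M2 0) * |v - u| := by
    intro u hu v hv
    have := Convex.norm_image_sub_le_of_norm_derivWithin_le hdiffg1
      (fun t ht => (hM2 t ht).trans (le_max_left M2 (0:ℝ))) (convex_Icc 0 1) hu hv
    simpa [Real.norm_eq_abs] using this
  refine ⟨max M1 0, max M2 0, le_max_right _ _, le_max_right _ _, ?_, ?_, ?_⟩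
  · exact fun u hu => le_trans (by simpa using hM1 u hu) (le_max_left M1 (0:ℝ))
  · intro u hu v hv
    have := Convex.norm_image_sub_le_of_norm_derivWithin_le hdiffg
      (fun t ht => (hM1 t ht).trans (le_max_left M1 (0:ℝ))) (convex_Icc 0 1) hu hv
    simpa [Real.norm_eq_abs] using this
  · intro σ hσ u hu v hv hd
    set s' := Set.Icc (0:ℝ) 1 ∩ Set.Icc (u - σ) (u + σ) with hs'def
    have hu' : u ∈ s' := ⟨hu, by constructor <;> linarith⟩
    have hv' : v ∈ s' := by
      rw [abs_le] at hd
      exact ⟨hv, by constructor <;> linarith [hd.1, hd.2]⟩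
    have hconv : Convex ℝ s' := (convex_Icc _ _).inter (convex_Icc _ _)
    have hder : ∀ t ∈ s', HasDerivWithinAt (fun t => g t - g1 u * t) (g1 t - g1 u) s' t := by
      intro t ht
      have h1 : HasDerivWithinAt g (g1 t) (Set.Icc 0 1) t := (hdiffg t ht.1).hasDerivWithinAt
      have h2 : HasDerivWithinAt (fun t : ℝ => g1 u * t) (g1 u) s' t := by
        simpa using (hasDerivWithinAt_id t s').const_mul (g1 u)
      exact (h1.mono Set.inter_subset_left).sub h2
    have hbound : ∀ t ∈ s', ‖g1 t - g1 u‖ ≤ (max M2 0) * σ := by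
      intro t ht
      have h3 : |t - u| ≤ σ := by
        rw [abs_le]; constructor <;> [linarith [ht.2.1]; linarith [ht.2.2]]
      calc ‖g1 t - g1 u‖ = |g1 t - g1 u| := Real.norm_eq_abs _
        _ ≤ (max M2 0) * |t - u| := hlip1 u hu t ht.1
        _ ≤ (max M2 0) * σ := mul_le_mul_of_nonneg_left h3 (le_max_right _ _)
    have key := hconv.norm_image_sub_le_of_norm_hasDerivWithin_le hder hbound hu' hv'
    have heq : g v - g1 u * v - (g u - g1 u * u) = g v - g u - g1 u * (v - u) := by ring
    rw [heq] at key
    simpa [Real.norm_eq_abs] using key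

/-! ### the uniform measure on (-1,1) and its products -/

def unif : Measure ℝ := (2⁻¹ : ℝ≥0∞) • (volume.restrict (Set.Ioo (-1:ℝ) 1))

instance unif_prob : IsProbabilityMeasure unif := by
  constructor
  rw [unif, Measure.smul_apply, Measure.restrict_apply MeasurableSet.univ, Set.univ_inter,
    Real.volume_Ioo, smul_eq_mul]
  rw [show (1:ℝ) - (-1) = 2 by norm_num, ENNReal.ofReal_ofNat, ENNReal.inv_mul_cancel] <;> norm_num

lemma unif_ae : ∀ᵐ t ∂unif, t ∈ Set.Ioo (-1:ℝ) 1 :=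
  Measure.ae_smul_measure (ae_restrict_mem measurableSet_Ioo) _

lemma unif_int_id : ∫ t, t ∂unif = 0 := by
  rw [unif, integral_smul_measure]
  have : ∫ t in Set.Ioo (-1:ℝ) 1, t = 0 := by
    rw [← integral_Ioc_eq_integral_Ioo,
      ← intervalIntegral.integral_of_le (by norm_num : (-1:ℝ) ≤ 1), integral_id]
    norm_num
  rw [this]; simp

lemma unif_integrable_of_bdd {h : ℝ → ℝ} (hm : AEStronglyMeasurable h unif) (C : ℝ)
    (hb : ∀ᵐ t ∂unif, |h t| ≤ C) : Integrable h unif :=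
  (integrable_const C).mono' hm (by simpa using hb)

def piUnif (d : ℕ) : Measure (Fin d → ℝ) := Measure.pi (fun _ => unif)

instance piUnif_prob (d : ℕ) : IsProbabilityMeasure (piUnif d) :=
  Measure.pi.instIsProbabilityMeasure _

lemma piUnif_eq (d : ℕ) :
    piUnif d = ((2⁻¹ : ℝ≥0∞) ^ d) •
      ((volume : Measure (Fin d → ℝ)).restrict (Set.univ.pi fun _ => Set.Ioo (-1:ℝ) 1)) := by
  refine Measure.pi_eq fun s hs => ?_
  rw [Measure.smul_apply, Measure.restrict_apply (MeasurableSet.univ_pi hs),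
    ← Set.pi_inter_distrib, volume_pi_pi, smul_eq_mul]
  have : ∀ i : Fin d, unif (s i) = 2⁻¹ * volume (s i ∩ Set.Ioo (-1:ℝ) 1) := fun i => by
    rw [unif, Measure.smul_apply, Measure.restrict_apply (hs i), smul_eq_mul]
  simp_rw [this]
  rw [Finset.prod_mul_distrib, Finset.prod_const, Finset.card_univ, Fintype.card_fin]

lemma piUnif_prod_integral {d : ℕ} (h : Fin d → ℝ → ℝ) :
    ∫ z, ∏ j, h j (z j) ∂(piUnif d) = ∏ j, ∫ t, h j t ∂unif := by
  letI : MeasureSpace ℝ := ⟨unif⟩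
  haveI : SigmaFinite (volume : Measure ℝ) := inferInstanceAs (SigmaFinite unif)
  exact MeasureTheory.integral_fintype_prod_eq_prod h

lemma piUnif_prod_integrable {d : ℕ} (h : Fin d → ℝ → ℝ) (hh : ∀ j, Integrable (h j) unif) :
    Integrable (fun z : Fin d → ℝ => ∏ j, h j (z j)) (piUnif d) := by
  letI : MeasureSpace ℝ := ⟨unif⟩
  haveI : SigmaFinite (volume : Measure ℝ) := inferInstanceAs (SigmaFinite unif)
  exact MeasureTheory.Integrable.fintype_prod hh

lemma piUnif_ae (d : ℕ) : ∀ᵐ z ∂(piUnif d), ∀ j, z j ∈ Set.Ioo (-1:ℝ) 1 := by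
  have h1 : unif (Set.Ioo (-1:ℝ) 1) = 1 := by
    rw [unif, Measure.smul_apply, Measure.restrict_apply measurableSet_Ioo, Set.inter_self,
      Real.volume_Ioo, smul_eq_mul]
    rw [show (1:ℝ) - (-1) = 2 by norm_num, ENNReal.ofReal_ofNat, ENNReal.inv_mul_cancel] <;>
      norm_num
  have h2 : (piUnif d) (Set.univ.pi fun _ => Set.Ioo (-1:ℝ) 1)ᶜ = 0 := by
    rw [measure_compl (MeasurableSet.univ_pi fun _ => measurableSet_Ioo) (measure_ne_top _ _)]
    rw [measure_univ, piUnif, Measure.pi_pi]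
    simp [h1]
  refine Filter.eventually_of_mem (MeasureTheory.mem_ae_iff.mpr h2) ?_
  intro z hz j
  exact hz j (Set.mem_univ j)

lemma coupleFail_eq (g : ℝ → ℝ) (l : ℝ) (d : ℕ) (x : Fin d → ℝ) :
    coupleFail g l d x =
      ∫ z, (∏ j, Set.indicator (Set.Ioo (0:ℝ) 1) (fun _ => (1:ℝ)) (x j + (l / (d:ℝ)) * z j)) *
        (1 - min 1 (Real.exp (∑ j, (g (x j + (l / (d:ℝ)) * z j) - g (x j))))) ∂(piUnif d) := by
  rw [piUnif_eq, integral_smul_measure, coupleFail, MeasureTheory.integral_const_mul]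
  rw [smul_eq_mul]; congr 1
  simp [ENNReal.toReal_pow]

lemma coupleFail_nonneg (g : ℝ → ℝ) (l : ℝ) (d : ℕ) (x : Fin d → ℝ) :
    0 ≤ coupleFail g l d x := by
  refine setIntegral_nonneg (MeasurableSet.univ_pi fun _ => measurableSet_Ioo) fun z _ => ?_
  have h1 : (0:ℝ) ≤ ∏ j, Set.indicator (Set.Ioo (0:ℝ) 1) (fun _ => (1:ℝ))
      (x j + (l / (d:ℝ)) * z j) :=
    Finset.prod_nonneg fun j _ => Set.indicator_nonneg (fun _ _ => zero_le_one) _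
  have h2 : (0:ℝ) ≤ 1 - min 1 (Real.exp (∑ j, (g (x j + (l / (d:ℝ)) * z j) - g (x j)))) := by
    have := min_le_left (1:ℝ) (Real.exp (∑ j, (g (x j + (l / (d:ℝ)) * z j) - g (x j))))
    linarith
  positivity

/-! ### the damping estimate -/

lemma damping {ι : Type*} [DecidableEq ι] (s : Finset ι) (p : ι → ℝ)
    (h0 : ∀ i, 0 ≤ p i) (h1 : ∀ i, p i ≤ 1) :
    ∑ j ∈ s, (1 - p j) * ∏ m ∈ s.erase j, p m ≤ 1 - ∏ m ∈ s, p m := by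
  induction s using Finset.induction_on with
  | empty => simp
  | @insert a s ha ih =>
    rw [Finset.sum_insert ha, Finset.erase_insert ha, Finset.prod_insert ha]
    have hps : ∀ j ∈ s, (insert a s).erase j = insert a (s.erase j) := fun j hj =>
      Finset.erase_insert_of_ne (fun h => ha (h ▸ hj))
    have hsum : ∑ j ∈ s, (1 - p j) * ∏ m ∈ (insert a s).erase j, p m
        = p a * ∑ j ∈ s, (1 - p j) * ∏ m ∈ s.erase j, p m := by
      rw [Finset.mul_sum]
      refine Finset.sum_congr rfl fun j hj => ?_
      rw [hps j hj, Finset.prod_insert (fun h => ha (Finset.erase_subset _ _ h))]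
      ring
    rw [hsum]
    have hprod0 : 0 ≤ ∏ m ∈ s, p m := Finset.prod_nonneg fun m _ => h0 m
    have hprod1 : ∏ m ∈ s, p m ≤ 1 := Finset.prod_le_one (fun m _ => h0 m) (fun m _ => h1 m)
    have hih := ih
    nlinarith [h0 a, h1 a, mul_le_mul_of_nonneg_left hih (h0 a)]

/-! ### pointwise inequality -/

lemma pointwise_ineq (s c : ℝ) : 1 - min 1 (Real.exp s) ≤ |s - c| + max 0 (-c) := by
  have h1 : 1 - min 1 (Real.exp s) ≤ max 0 (-s) := by
    rcases le_total 1 (Real.exp s) with h | h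
    · rw [min_eq_left h]; simp
    · rw [min_eq_right h]
      have := Real.add_one_le_exp s
      have h2 : 1 - Real.exp s ≤ -s := by linarith
      exact h2.trans (le_max_right _ _)
  refine h1.trans (max_le (by positivity) ?_)
  have h3 : c - s ≤ |s - c| := by rw [abs_sub_comm]; exact le_abs_self _
  have h4 : -c ≤ max 0 (-c) := le_max_right _ _
  linarith

/-! ### one-dimensional coordinate quantities -/

def GG (g : ℝ → ℝ) : ℝ → ℝ := fun t => g (max 0 (min 1 t))

def ff (a σ : ℝ) : ℝ → ℝ :=
  fun t => Set.indicator (Set.Ioo (0:ℝ) 1) (fun _ => (1:ℝ)) (a + σ * t)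

def YY (g : ℝ → ℝ) (a σ : ℝ) : ℝ → ℝ := fun t => GG g (a + σ * t) - GG g a

def pp (a σ : ℝ) : ℝ := ∫ t, ff a σ t ∂unif

def qq (g : ℝ → ℝ) (a σ : ℝ) : ℝ := ∫ t, ff a σ t * YY g a σ t ∂unif

def ccc (g : ℝ → ℝ) (a σ : ℝ) : ℝ := qq g a σ / pp a σ

def vv (g : ℝ → ℝ) (a σ : ℝ) : ℝ :=
  ∫ t, ff a σ t * (YY g a σ t - ccc g a σ)^2 ∂unif

variable {g : ℝ → ℝ} {M1 M2 σ a : ℝ}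

lemma ff_nonneg (a σ t : ℝ) : 0 ≤ ff a σ t :=
  Set.indicator_nonneg (fun _ _ => zero_le_one) _

lemma ff_le_one (a σ t : ℝ) : ff a σ t ≤ 1 := by
  by_cases h : a + σ * t ∈ Set.Ioo (0:ℝ) 1 <;>
    simp [ff, Set.indicator_of_mem, Set.indicator_of_notMem, h]

lemma ff_mul_self (a σ t : ℝ) : ff a σ t * ff a σ t = ff a σ t := by
  by_cases h : a + σ * t ∈ Set.Ioo (0:ℝ) 1 <;>
    simp [ff, Set.indicator_of_mem, Set.indicator_of_notMem, h]

lemma ff_mem {t : ℝ} (h : ff a σ t ≠ 0) : a + σ * t ∈ Set.Ioo (0:ℝ) 1 := by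
  by_contra hc
  exact h (Set.indicator_of_notMem hc _)

lemma ff_one {t : ℝ} (h : a + σ * t ∈ Set.Ioo (0:ℝ) 1) : ff a σ t = 1 :=
  Set.indicator_of_mem h _

lemma ff_meas (a σ : ℝ) : Measurable (ff a σ) := by
  have h1 : Measurable fun t : ℝ => a + σ * t :=
    (measurable_id.const_mul σ).const_add a
  exact (measurable_const.indicator measurableSet_Ioo).comp h1

lemma GG_cont (hgc : ContinuousOn g (Set.Icc 0 1)) : Continuous (GG g) := by
  refine hgc.comp_continuous ?_ clamp_mem
  exact continuous_const.max (continuous_const.min continuous_id)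

lemma GG_lip (hM10 : 0 ≤ M1)
    (hLip : ∀ u ∈ Set.Icc (0:ℝ) 1, ∀ v ∈ Set.Icc (0:ℝ) 1, |g v - g u| ≤ M1 * |v - u|)
    (s t : ℝ) : |GG g s - GG g t| ≤ M1 * |s - t| := by
  calc |GG g s - GG g t| ≤ M1 * |max 0 (min 1 s) - max 0 (min 1 t)| :=
        hLip _ (clamp_mem t) _ (clamp_mem s)
    _ ≤ M1 * |s - t| := mul_le_mul_of_nonneg_left (clamp_lip s t) hM10

lemma YY_bdd (hM10 : 0 ≤ M1)
    (hLip : ∀ u ∈ Set.Icc (0:ℝ) 1, ∀ v ∈ Set.Icc (0:ℝ) 1, |g v - g u| ≤ M1 * |v - u|)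
    (hσ : 0 ≤ σ) {t : ℝ} (ht : |t| ≤ 1) : |YY g a σ t| ≤ M1 * σ := by
  have h1 := GG_lip hM10 hLip (a + σ * t) a
  have h2 : |a + σ * t - a| = σ * |t| := by
    rw [show a + σ * t - a = σ * t by ring, abs_mul, abs_of_nonneg hσ]
  rw [h2] at h1
  calc |YY g a σ t| ≤ M1 * (σ * |t|) := h1
    _ ≤ M1 * (σ * 1) :=
        mul_le_mul_of_nonneg_left (mul_le_mul_of_nonneg_left ht hσ) hM10
    _ = M1 * σ := by ring

lemma YY_meas (hgc : ContinuousOn g (Set.Icc 0 1)) : Measurable (YY g a σ) := by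
  have h1 : Measurable fun t : ℝ => a + σ * t := (measurable_id.const_mul σ).const_add a
  exact (((GG_cont hgc).measurable).comp h1).sub measurable_const

lemma int_ff (a σ : ℝ) : Integrable (ff a σ) unif :=
  unif_integrable_of_bdd (ff_meas a σ).aestronglyMeasurable 1
    (Filter.Eventually.of_forall fun t => by
      rw [abs_of_nonneg (ff_nonneg a σ t)]; exact ff_le_one a σ t)

lemma int_ff_mul {w : ℝ → ℝ} (hw : Measurable w) (B : ℝ)
    (hB : ∀ t ∈ Set.Ioo (-1:ℝ) 1, |w t| ≤ B) :
    Integrable (fun t => ff a σ t * w t) unif := by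
  refine unif_integrable_of_bdd ((ff_meas a σ).mul hw).aestronglyMeasurable B
    (unif_ae.mono fun t ht => ?_)
  calc |ff a σ t * w t| = |ff a σ t| * |w t| := abs_mul _ _
    _ ≤ 1 * B := by
        refine mul_le_mul ?_ (hB t ht) (abs_nonneg _) zero_le_one
        rw [abs_of_nonneg (ff_nonneg a σ t)]; exact ff_le_one a σ t
    _ = B := one_mul B

lemma abs_int_unif_le (h : ℝ → ℝ) : |∫ t, h t ∂unif| ≤ ∫ t, |h t| ∂unif := by
  simpa [Real.norm_eq_abs] using MeasureTheory.norm_integral_le_integral_norm (μ := unif) h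

lemma int_id_unif : Integrable (fun t : ℝ => t) unif :=
  unif_integrable_of_bdd measurable_id.aestronglyMeasurable 1
    (unif_ae.mono fun t ht => by
      rw [abs_le]; exact ⟨ht.1.le, ht.2.le⟩)

lemma int_ffYY (hgc : ContinuousOn g (Set.Icc 0 1)) (hM10 : 0 ≤ M1)
    (hLip : ∀ u ∈ Set.Icc (0:ℝ) 1, ∀ v ∈ Set.Icc (0:ℝ) 1, |g v - g u| ≤ M1 * |v - u|)
    (hσ : 0 ≤ σ) : Integrable (fun t => ff a σ t * YY g a σ t) unif :=
  int_ff_mul (YY_meas hgc) (M1 * σ)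
    (fun t ht => YY_bdd hM10 hLip hσ (abs_le.mpr ⟨ht.1.le, ht.2.le⟩))

lemma pp_nonneg (a σ : ℝ) : 0 ≤ pp a σ :=
  integral_nonneg (fun t => ff_nonneg a σ t)

lemma pp_le_one (a σ : ℝ) : pp a σ ≤ 1 := by
  have := integral_mono (int_ff a σ) (integrable_const (1:ℝ)) (ff_le_one a σ)
  have h2 : ∫ t, ff a σ t ∂unif ≤ 1 := by simpa using this
  exact h2

lemma qq_eq (hgc : ContinuousOn g (Set.Icc 0 1)) (hM10 : 0 ≤ M1)
    (hLip : ∀ u ∈ Set.Icc (0:ℝ) 1, ∀ v ∈ Set.Icc (0:ℝ) 1, |g v - g u| ≤ M1 * |v - u|)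
    (hσ : 0 ≤ σ) :
    ∫ t, ff a σ t * (YY g a σ t - ccc g a σ) ∂unif = 0 := by
  have hintY := int_ffYY (a := a) hgc hM10 hLip hσ
  have hsplit : ∫ t, ff a σ t * (YY g a σ t - ccc g a σ) ∂unif
      = qq g a σ - ccc g a σ * pp a σ := by
    have heq : (fun t => ff a σ t * (YY g a σ t - ccc g a σ))
        = fun t => ff a σ t * YY g a σ t - ccc g a σ * ff a σ t := by
      funext t; ring
    rw [heq, integral_sub hintY ((int_ff a σ).const_mul _), MeasureTheory.integral_const_mul]
    rfl
  rw [hsplit]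
  by_cases hp : pp a σ = 0
  · have hf0 : ff a σ =ᵐ[unif] 0 :=
      (integral_eq_zero_iff_of_nonneg (fun t => ff_nonneg a σ t) (int_ff a σ)).mp hp
    have hq0 : qq g a σ = 0 := by
      rw [qq, ← integral_zero ℝ ℝ (μ := unif)]
      refine integral_congr_ae (hf0.mono fun t ht => ?_)
      simp only [Pi.zero_apply] at ht ⊢
      rw [ht, zero_mul]
    rw [ccc, hq0, hp]; simp
  · rw [ccc, div_mul_cancel₀ _ hp]; ring

lemma qq_abs (hgc : ContinuousOn g (Set.Icc 0 1)) (hM10 : 0 ≤ M1)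
    (hLip : ∀ u ∈ Set.Icc (0:ℝ) 1, ∀ v ∈ Set.Icc (0:ℝ) 1, |g v - g u| ≤ M1 * |v - u|)
    (hσ : 0 ≤ σ) : |qq g a σ| ≤ M1 * σ * pp a σ := by
  have hintY := int_ffYY (a := a) hgc hM10 hLip hσ
  calc |qq g a σ| ≤ ∫ t, |ff a σ t * YY g a σ t| ∂unif := abs_int_unif_le _
    _ ≤ ∫ t, M1 * σ * ff a σ t ∂unif := by
        refine integral_mono_ae hintY.abs ((int_ff a σ).const_mul _)
          (unif_ae.mono fun t ht => ?_)
        show |ff a σ t * YY g a σ t| ≤ M1 * σ * ff a σ t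
        rw [abs_mul, abs_of_nonneg (ff_nonneg a σ t)]
        calc ff a σ t * |YY g a σ t| ≤ ff a σ t * (M1 * σ) :=
              mul_le_mul_of_nonneg_left
                (YY_bdd hM10 hLip hσ (abs_le.mpr ⟨ht.1.le, ht.2.le⟩)) (ff_nonneg a σ t)
          _ = M1 * σ * ff a σ t := by ring
    _ = M1 * σ * pp a σ := by rw [MeasureTheory.integral_const_mul]; rfl

lemma ccc_abs (hgc : ContinuousOn g (Set.Icc 0 1)) (hM10 : 0 ≤ M1)
    (hLip : ∀ u ∈ Set.Icc (0:ℝ) 1, ∀ v ∈ Set.Icc (0:ℝ) 1, |g v - g u| ≤ M1 * |v - u|)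
    (hσ : 0 ≤ σ) : |ccc g a σ| ≤ M1 * σ := by
  by_cases hp : pp a σ = 0
  · rw [ccc, hp, div_zero, abs_zero]; positivity
  · have hppos : 0 < pp a σ := lt_of_le_of_ne (pp_nonneg a σ) (Ne.symm hp)
    rw [ccc, abs_div, abs_of_nonneg (pp_nonneg a σ), div_le_iff₀ hppos]
    calc |qq g a σ| ≤ M1 * σ * pp a σ := qq_abs hgc hM10 hLip hσ
      _ = M1 * σ * pp a σ := rfl

lemma ccc_pp_le : |ccc g a σ| * pp a σ ≤ |qq g a σ| := by
  by_cases hp : pp a σ = 0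
  · rw [hp, mul_zero]; exact abs_nonneg _
  · rw [ccc, abs_div, abs_of_nonneg (pp_nonneg a σ), div_mul_cancel₀ _ hp]

lemma vv_nonneg (g : ℝ → ℝ) (a σ : ℝ) : 0 ≤ vv g a σ :=
  integral_nonneg fun t => mul_nonneg (ff_nonneg a σ t) (sq_nonneg _)

lemma int_ffW2 (hgc : ContinuousOn g (Set.Icc 0 1)) (hM10 : 0 ≤ M1)
    (hLip : ∀ u ∈ Set.Icc (0:ℝ) 1, ∀ v ∈ Set.Icc (0:ℝ) 1, |g v - g u| ≤ M1 * |v - u|)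
    (hσ : 0 ≤ σ) :
    Integrable (fun t => ff a σ t * (YY g a σ t - ccc g a σ)^2) unif := by
  refine int_ff_mul (((YY_meas hgc).sub measurable_const).pow_const 2) (4 * (M1 * σ)^2)
    (fun t ht => ?_)
  have h1 : |YY g a σ t| ≤ M1 * σ := YY_bdd hM10 hLip hσ (abs_le.mpr ⟨ht.1.le, ht.2.le⟩)
  have h2 : |ccc g a σ| ≤ M1 * σ := ccc_abs hgc hM10 hLip hσ
  have h3 : |YY g a σ t - ccc g a σ| ≤ 2 * (M1 * σ) := by
    rw [sub_eq_add_neg]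
    refine (abs_add_le _ _).trans ?_
    rw [abs_neg]; linarith
  rw [abs_of_nonneg (sq_nonneg _)]
  calc (YY g a σ t - ccc g a σ)^2 = |YY g a σ t - ccc g a σ|^2 := (sq_abs _).symm
    _ ≤ (2 * (M1 * σ))^2 := pow_le_pow_left₀ (abs_nonneg _) h3 2
    _ = 4 * (M1 * σ)^2 := by ring

lemma vv_le (hgc : ContinuousOn g (Set.Icc 0 1)) (hM10 : 0 ≤ M1)
    (hLip : ∀ u ∈ Set.Icc (0:ℝ) 1, ∀ v ∈ Set.Icc (0:ℝ) 1, |g v - g u| ≤ M1 * |v - u|)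
    (hσ : 0 ≤ σ) : vv g a σ ≤ 4 * (M1 * σ)^2 := by
  have hint := int_ffW2 (a := a) hgc hM10 hLip hσ
  calc vv g a σ ≤ ∫ _t, 4 * (M1 * σ)^2 ∂unif := by
        refine integral_mono_ae hint (integrable_const _) (unif_ae.mono fun t ht => ?_)
        have h1 : |YY g a σ t| ≤ M1 * σ := YY_bdd hM10 hLip hσ (abs_le.mpr ⟨ht.1.le, ht.2.le⟩)
        have h2 : |ccc g a σ| ≤ M1 * σ := ccc_abs hgc hM10 hLip hσ
        have h3 : |YY g a σ t - ccc g a σ| ≤ 2 * (M1 * σ) := by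
          rw [sub_eq_add_neg]
          refine (abs_add_le _ _).trans ?_
          rw [abs_neg]; linarith
        have h4 : (YY g a σ t - ccc g a σ)^2 ≤ 4 * (M1 * σ)^2 := by
          calc (YY g a σ t - ccc g a σ)^2 = |YY g a σ t - ccc g a σ|^2 := (sq_abs _).symm
            _ ≤ (2 * (M1 * σ))^2 := pow_le_pow_left₀ (abs_nonneg _) h3 2
            _ = 4 * (M1 * σ)^2 := by ring
        calc ff a σ t * (YY g a σ t - ccc g a σ)^2 ≤ 1 * (4 * (M1 * σ)^2) :=
              mul_le_mul (ff_le_one a σ t) h4 (sq_nonneg _)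
                (by positivity)
          _ = 4 * (M1 * σ)^2 := one_mul _
    _ = 4 * (M1 * σ)^2 := by simp

lemma rr_abs (a σ : ℝ) : |∫ t, ff a σ t * t ∂unif| ≤ 1 - pp a σ := by
  have hint_ft : Integrable (fun t => ff a σ t * t) unif :=
    int_ff_mul measurable_id 1 (fun t ht => abs_le.mpr ⟨ht.1.le, ht.2.le⟩)
  have hsub : Integrable (fun t => t - ff a σ t * t) unif := int_id_unif.sub hint_ft
  have heq : ∫ t, ff a σ t * t ∂unif = - ∫ t, (t - ff a σ t * t) ∂unif := by
    rw [integral_sub int_id_unif hint_ft, unif_int_id]; ring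
  rw [heq, abs_neg]
  calc |∫ t, (t - ff a σ t * t) ∂unif| ≤ ∫ t, |t - ff a σ t * t| ∂unif :=
        abs_int_unif_le _
    _ ≤ ∫ t, (1 - ff a σ t) ∂unif := by
        refine integral_mono_ae hsub.abs ((integrable_const 1).sub (int_ff a σ))
          (unif_ae.mono fun t ht => ?_)
        have h1 : |t| ≤ 1 := abs_le.mpr ⟨ht.1.le, ht.2.le⟩
        calc |t - ff a σ t * t| = |(1 - ff a σ t) * t| := by ring_nf
          _ = (1 - ff a σ t) * |t| := by
              rw [abs_mul, abs_of_nonneg (by linarith [ff_le_one a σ t])]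
          _ ≤ (1 - ff a σ t) * 1 :=
              mul_le_mul_of_nonneg_left h1 (by linarith [ff_le_one a σ t])
          _ = 1 - ff a σ t := mul_one _
    _ = 1 - pp a σ := by
        rw [integral_sub (integrable_const 1) (int_ff a σ)]
        simp [pp]

lemma qq_refined (hgc : ContinuousOn g (Set.Icc 0 1)) (hM10 : 0 ≤ M1) (hM20 : 0 ≤ M2)
    (hM1b : ∀ u ∈ Set.Icc (0:ℝ) 1, |derivWithin g (Set.Icc 0 1) u| ≤ M1)
    (hLip : ∀ u ∈ Set.Icc (0:ℝ) 1, ∀ v ∈ Set.Icc (0:ℝ) 1, |g v - g u| ≤ M1 * |v - u|)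
    (hTay : ∀ σ' : ℝ, 0 ≤ σ' → ∀ u ∈ Set.Icc (0:ℝ) 1, ∀ v ∈ Set.Icc (0:ℝ) 1, |v - u| ≤ σ' →
      |g v - g u - derivWithin g (Set.Icc 0 1) u * (v - u)| ≤ M2 * σ' * |v - u|)
    (hσ : 0 < σ) (ha : a ∈ Set.Icc (0:ℝ) 1) :
    |qq g a σ| ≤ M1 * σ * (1 - pp a σ) + M2 * σ^2 := by
  set aD := derivWithin g (Set.Icc 0 1) a with haDdef
  set r := ∫ t, ff a σ t * t ∂unif with hrdef
  have hint_ft : Integrable (fun t => ff a σ t * t) unif :=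
    int_ff_mul measurable_id 1 (fun t ht => abs_le.mpr ⟨ht.1.le, ht.2.le⟩)
  have hintY := int_ffYY (a := a) hgc hM10 hLip hσ.le
  have hstep1 : |qq g a σ - aD * σ * r| ≤ M2 * σ^2 := by
    have heq : qq g a σ - aD * σ * r
        = ∫ t, (ff a σ t * YY g a σ t - aD * σ * (ff a σ t * t)) ∂unif := by
      rw [integral_sub hintY (hint_ft.const_mul _), MeasureTheory.integral_const_mul]
      rfl
    rw [heq]
    have hintsub : Integrable
        (fun t => ff a σ t * YY g a σ t - aD * σ * (ff a σ t * t)) unif :=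
      hintY.sub (hint_ft.const_mul _)
    refine (abs_int_unif_le _).trans ?_
    calc ∫ t, |ff a σ t * YY g a σ t - aD * σ * (ff a σ t * t)| ∂unif
        ≤ ∫ _t, M2 * σ^2 ∂unif := by
          refine integral_mono_ae hintsub.abs (integrable_const _)
            (unif_ae.mono fun t ht => ?_)
          show |ff a σ t * YY g a σ t - aD * σ * (ff a σ t * t)| ≤ M2 * σ^2
          by_cases hf : ff a σ t = 0
          · simp only [hf, zero_mul, mul_zero, sub_zero, abs_zero]
            positivity
          · have hmem := ff_mem hf
            have hf1 : ff a σ t = 1 := ff_one hmem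
            have hmemI : a + σ * t ∈ Set.Icc (0:ℝ) 1 := Set.mem_Icc.mpr ⟨hmem.1.le, hmem.2.le⟩
            have hY : YY g a σ t = g (a + σ * t) - g a := by
              rw [YY, GG, GG, clamp_eq hmemI, clamp_eq ha]
            have hdist : |(a + σ * t) - a| ≤ σ := by
              rw [show a + σ * t - a = σ * t by ring, abs_mul, abs_of_nonneg hσ.le]
              calc σ * |t| ≤ σ * 1 :=
                    mul_le_mul_of_nonneg_left (abs_le.mpr ⟨ht.1.le, ht.2.le⟩) hσ.le
                _ = σ := mul_one σ
            have htay := hTay σ hσ.le a ha (a + σ * t) hmemI hdist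
            rw [hf1, one_mul, one_mul]
            have heq2 : YY g a σ t - aD * σ * t
                = g (a + σ * t) - g a - aD * ((a + σ * t) - a) := by
              rw [hY]; ring
            rw [heq2]
            calc |g (a + σ * t) - g a - aD * ((a + σ * t) - a)|
                ≤ M2 * σ * |(a + σ * t) - a| := htay
              _ ≤ M2 * σ * σ := mul_le_mul_of_nonneg_left hdist (by positivity)
              _ = M2 * σ^2 := by ring
      _ = M2 * σ^2 := by simp
  have hstep2 : |r| ≤ 1 - pp a σ := rr_abs a σ
  have haD : |aD| ≤ M1 := hM1b a ha
  have h5 : |aD * σ * r| ≤ M1 * σ * (1 - pp a σ) := by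
    rw [abs_mul, abs_mul, abs_of_nonneg hσ.le]
    have h6 : |aD| * σ ≤ M1 * σ := mul_le_mul_of_nonneg_right haD hσ.le
    exact mul_le_mul h6 hstep2 (abs_nonneg _) (by positivity)
  calc |qq g a σ| = |(qq g a σ - aD * σ * r) + aD * σ * r| := by ring_nf
    _ ≤ |qq g a σ - aD * σ * r| + |aD * σ * r| := abs_add_le _ _
    _ ≤ M2 * σ^2 + M1 * σ * (1 - pp a σ) := add_le_add hstep1 h5
    _ = M1 * σ * (1 - pp a σ) + M2 * σ^2 := by ring
def WW (g : ℝ → ℝ) (a σ : ℝ) : ℝ → ℝ := fun t => YY g a σ t - ccc g a σ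

lemma WW_meas (hgc : ContinuousOn g (Set.Icc 0 1)) : Measurable (WW g a σ) :=
  (YY_meas hgc).sub measurable_const

lemma WW_bdd (hgc : ContinuousOn g (Set.Icc 0 1)) (hM10 : 0 ≤ M1)
    (hLip : ∀ u ∈ Set.Icc (0:ℝ) 1, ∀ v ∈ Set.Icc (0:ℝ) 1, |g v - g u| ≤ M1 * |v - u|)
    (hσ : 0 ≤ σ) {t : ℝ} (ht : |t| ≤ 1) : |WW g a σ t| ≤ 2 * (M1 * σ) := by
  have h1 : |YY g a σ t| ≤ M1 * σ := YY_bdd hM10 hLip hσ ht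
  have h2 : |ccc g a σ| ≤ M1 * σ := ccc_abs hgc hM10 hLip hσ
  rw [WW, sub_eq_add_neg]
  refine (abs_add_le _ _).trans ?_
  rw [abs_neg]; linarith

lemma int_ffWW_zero (hgc : ContinuousOn g (Set.Icc 0 1)) (hM10 : 0 ≤ M1)
    (hLip : ∀ u ∈ Set.Icc (0:ℝ) 1, ∀ v ∈ Set.Icc (0:ℝ) 1, |g v - g u| ≤ M1 * |v - u|)
    (hσ : 0 ≤ σ) : ∫ t, ff a σ t * WW g a σ t ∂unif = 0 :=
  qq_eq hgc hM10 hLip hσ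

lemma int_ffWW_sq (a : ℝ) : (∫ t, ff a σ t * (WW g a σ t * WW g a σ t) ∂unif) = vv g a σ := by
  rw [vv]
  congr 1
  funext t
  rw [WW, sq]

/-! ### multi-dimensional estimate -/

lemma piUnif_integrable_of_bdd {d : ℕ} {h : Fin d → ℝ} (hm : True) : True := trivial

lemma piUnif_int_of_bdd {d : ℕ} {h : (Fin d → ℝ) → ℝ}
    (hm : AEStronglyMeasurable h (piUnif d)) (C : ℝ)
    (hb : ∀ᵐ z ∂(piUnif d), |h z| ≤ C) : Integrable h (piUnif d) :=
  (integrable_const C).mono' hm (by simpa using hb)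

lemma multi_bound {d : ℕ} (g : ℝ → ℝ) (σ : ℝ) (hσ : 0 < σ) (x : Fin d → ℝ)
    (hxj : ∀ j, x j ∈ Set.Icc (0:ℝ) 1)
    (hgc : ContinuousOn g (Set.Icc 0 1))
    {M1 M2 : ℝ} (hM10 : 0 ≤ M1) (hM20 : 0 ≤ M2)
    (hM1b : ∀ u ∈ Set.Icc (0:ℝ) 1, |derivWithin g (Set.Icc 0 1) u| ≤ M1)
    (hLip : ∀ u ∈ Set.Icc (0:ℝ) 1, ∀ v ∈ Set.Icc (0:ℝ) 1, |g v - g u| ≤ M1 * |v - u|)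
    (hTay : ∀ σ' : ℝ, 0 ≤ σ' → ∀ u ∈ Set.Icc (0:ℝ) 1, ∀ v ∈ Set.Icc (0:ℝ) 1, |v - u| ≤ σ' →
      |g v - g u - derivWithin g (Set.Icc 0 1) u * (v - u)| ≤ M2 * σ' * |v - u|) :
    ∫ z, (∏ j, ff (x j) σ (z j)) *
        (1 - min 1 (Real.exp (∑ j, YY g (x j) σ (z j)))) ∂(piUnif d)
      ≤ Real.sqrt (d * (4 * (M1 * σ)^2)) + (M1 * σ + d * (M2 * σ^2)) := by
  classical
  set P := piUnif d with hPdef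
  set cs : ℝ := ∑ j, ccc g (x j) σ with hcsdef
  set K : ℝ := max 0 (-cs) with hKdef
  -- measurability
  have hprodmeas : Measurable fun z : Fin d → ℝ => ∏ j, ff (x j) σ (z j) :=
    Finset.measurable_prod _ (fun j _ => (ff_meas _ _).comp (measurable_pi_apply j))
  have hsummeas : Measurable fun z : Fin d → ℝ => ∑ j, YY g (x j) σ (z j) :=
    Finset.measurable_sum _ (fun j _ => (YY_meas hgc).comp (measurable_pi_apply j))
  -- pointwise bounds on the indicator product
  have hprod0 : ∀ z : Fin d → ℝ, 0 ≤ ∏ j, ff (x j) σ (z j) :=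
    fun z => Finset.prod_nonneg fun j _ => ff_nonneg _ _ _
  have hprod1 : ∀ z : Fin d → ℝ, (∏ j, ff (x j) σ (z j)) ≤ 1 :=
    fun z => Finset.prod_le_one (fun j _ => ff_nonneg _ _ _) (fun j _ => ff_le_one _ _ _)
  have hae := piUnif_ae d
  -- a.e. bound on the centered sum
  have hW : ∀ᵐ z ∂P, |(∑ j, YY g (x j) σ (z j)) - cs| ≤ d * (M1 * σ) + |cs| := by
    refine hae.mono fun z hz => ?_
    have h1 : |∑ j, YY g (x j) σ (z j)| ≤ d * (M1 * σ) := by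
      refine (Finset.abs_sum_le_sum_abs _ _).trans ?_
      have := Finset.sum_le_card_nsmul Finset.univ
        (fun j => |YY g (x j) σ (z j)|) (M1 * σ)
        (fun j _ => YY_bdd hM10 hLip hσ.le (abs_le.mpr ⟨(hz j).1.le, (hz j).2.le⟩))
      simpa [Finset.card_univ, nsmul_eq_mul] using this
    calc |(∑ j, YY g (x j) σ (z j)) - cs| ≤ |∑ j, YY g (x j) σ (z j)| + |cs| := by
          rw [sub_eq_add_neg]; exact (abs_add_le _ _).trans (by rw [abs_neg])
      _ ≤ d * (M1 * σ) + |cs| := by linarith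
  -- integrability of all the players
  have hintF : Integrable (fun z => (∏ j, ff (x j) σ (z j)) *
      (1 - min 1 (Real.exp (∑ j, YY g (x j) σ (z j))))) P := by
    refine piUnif_int_of_bdd (Measurable.aestronglyMeasurable ?_) 1
      (Filter.Eventually.of_forall fun z => ?_)
    · exact hprodmeas.mul
        (measurable_const.sub (measurable_const.min (Real.measurable_exp.comp hsummeas)))
    · have h2 : min 1 (Real.exp (∑ j, YY g (x j) σ (z j))) ≤ 1 := min_le_left _ _
      have h3 : 0 ≤ min 1 (Real.exp (∑ j, YY g (x j) σ (z j))) :=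
        le_min zero_le_one (Real.exp_pos _).le
      rw [abs_mul, abs_of_nonneg (hprod0 z), abs_of_nonneg (by linarith)]
      calc (∏ j, ff (x j) σ (z j)) * (1 - min 1 (Real.exp (∑ j, YY g (x j) σ (z j))))
          ≤ 1 * 1 := mul_le_mul (hprod1 z) (by linarith) (by linarith) zero_le_one
        _ = 1 := one_mul 1
  have hintT : Integrable (fun z => (∏ j, ff (x j) σ (z j)) *
      |(∑ j, YY g (x j) σ (z j)) - cs|) P := by
    refine piUnif_int_of_bdd (Measurable.aestronglyMeasurable
      (hprodmeas.mul ((hsummeas.sub measurable_const).abs))) (d * (M1 * σ) + |cs|)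
      (hW.mono fun z hz => ?_)
    rw [abs_mul, abs_of_nonneg (hprod0 z), abs_abs]
    calc (∏ j, ff (x j) σ (z j)) * |(∑ j, YY g (x j) σ (z j)) - cs|
        ≤ 1 * (d * (M1 * σ) + |cs|) :=
          mul_le_mul (hprod1 z) hz (abs_nonneg _) zero_le_one
      _ = d * (M1 * σ) + |cs| := one_mul _
  have hintPK : Integrable (fun z => (∏ j, ff (x j) σ (z j)) * K) P := by
    refine piUnif_int_of_bdd (Measurable.aestronglyMeasurable
      (hprodmeas.mul measurable_const)) |K| (Filter.Eventually.of_forall fun z => ?_)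
    rw [abs_mul]
    calc |∏ j, ff (x j) σ (z j)| * |K| ≤ 1 * |K| := by
          refine mul_le_mul_of_nonneg_right ?_ (abs_nonneg _)
          rw [abs_of_nonneg (hprod0 z)]; exact hprod1 z
      _ = |K| := one_mul _
  -- Step 1: pointwise domination
  have step1 : ∫ z, (∏ j, ff (x j) σ (z j)) *
      (1 - min 1 (Real.exp (∑ j, YY g (x j) σ (z j)))) ∂P
      ≤ ∫ z, ((∏ j, ff (x j) σ (z j)) * |(∑ j, YY g (x j) σ (z j)) - cs|
          + (∏ j, ff (x j) σ (z j)) * K) ∂P := by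
    refine integral_mono hintF (hintT.add hintPK) fun z => ?_
    have h1 := pointwise_ineq (∑ j, YY g (x j) σ (z j)) cs
    calc (∏ j, ff (x j) σ (z j)) * (1 - min 1 (Real.exp (∑ j, YY g (x j) σ (z j))))
        ≤ (∏ j, ff (x j) σ (z j)) * (|(∑ j, YY g (x j) σ (z j)) - cs| + K) :=
          mul_le_mul_of_nonneg_left h1 (hprod0 z)
      _ = (∏ j, ff (x j) σ (z j)) * |(∑ j, YY g (x j) σ (z j)) - cs|
          + (∏ j, ff (x j) σ (z j)) * K := mul_add _ _ _
  -- Step 2: split the integral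
  have step2 : ∫ z, ((∏ j, ff (x j) σ (z j)) * |(∑ j, YY g (x j) σ (z j)) - cs|
      + (∏ j, ff (x j) σ (z j)) * K) ∂P
      = (∫ z, (∏ j, ff (x j) σ (z j)) * |(∑ j, YY g (x j) σ (z j)) - cs| ∂P)
        + K * ∏ j, pp (x j) σ := by
    rw [integral_add hintT hintPK, MeasureTheory.integral_mul_const]
    congr 1
    rw [mul_comm]
    congr 1
    exact piUnif_prod_integral (fun j => ff (x j) σ)
  -- Step 3: Cauchy-Schwarz bound for the first term
  have step3 : (∫ z, (∏ j, ff (x j) σ (z j)) * |(∑ j, YY g (x j) σ (z j)) - cs| ∂P)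
      ≤ Real.sqrt (d * (4 * (M1 * σ)^2)) := by
    set T : (Fin d → ℝ) → ℝ :=
      fun z => (∏ j, ff (x j) σ (z j)) * |(∑ j, YY g (x j) σ (z j)) - cs| with hTdef
    have hTmeas : Measurable T := hprodmeas.mul ((hsummeas.sub measurable_const).abs)
    -- pointwise expansion of the square
    have hexpand : ∀ z : Fin d → ℝ, (T z)^2
        = ∑ j, ∑ k, (∏ m, ff (x m) σ (z m)) * (WW g (x j) σ (z j) * WW g (x k) σ (z k)) := by
      intro z
      have e1 : (∏ m, ff (x m) σ (z m))^2 = ∏ m, ff (x m) σ (z m) := by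
        rw [sq, ← Finset.prod_mul_distrib]
        exact Finset.prod_congr rfl fun m _ => ff_mul_self _ _ _
      have e2 : (∑ j, YY g (x j) σ (z j)) - cs = ∑ j, WW g (x j) σ (z j) := by
        rw [hcsdef, ← Finset.sum_sub_distrib]
        rfl
      rw [hTdef]
      show ((∏ j, ff (x j) σ (z j)) * |(∑ j, YY g (x j) σ (z j)) - cs|)^2 = _
      rw [mul_pow, sq_abs, e1, e2, sq, Finset.sum_mul_sum, Finset.mul_sum]
      exact Finset.sum_congr rfl fun j _ => by rw [Finset.mul_sum]
    -- integrability of each term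
    have hbase_int : ∀ j k : Fin d, Integrable
        (fun z : Fin d → ℝ => (∏ m, ff (x m) σ (z m)) *
          (WW g (x j) σ (z j) * WW g (x k) σ (z k))) P := by
      intro j k
      refine piUnif_int_of_bdd (Measurable.aestronglyMeasurable
        (hprodmeas.mul (((WW_meas hgc).comp (measurable_pi_apply j)).mul
          ((WW_meas hgc).comp (measurable_pi_apply k))))) ((2*(M1*σ)) * (2*(M1*σ)))
        (hae.mono fun z hz => ?_)
      have hj := WW_bdd (a := x j) hgc hM10 hLip hσ.le
        (abs_le.mpr ⟨(hz j).1.le, (hz j).2.le⟩)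
      have hk := WW_bdd (a := x k) hgc hM10 hLip hσ.le
        (abs_le.mpr ⟨(hz k).1.le, (hz k).2.le⟩)
      rw [abs_mul, abs_mul]
      calc |∏ m, ff (x m) σ (z m)| * (|WW g (x j) σ (z j)| * |WW g (x k) σ (z k)|)
          ≤ 1 * ((2*(M1*σ)) * (2*(M1*σ))) := by
            refine mul_le_mul ?_ ?_ (by positivity) zero_le_one
            · rw [abs_of_nonneg (hprod0 z)]; exact hprod1 z
            · exact mul_le_mul hj hk (abs_nonneg _) (by positivity)
        _ = (2*(M1*σ)) * (2*(M1*σ)) := one_mul _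
    -- off-diagonal terms vanish
    have hoff : ∀ j k : Fin d, j ≠ k →
        (∫ z, (∏ m, ff (x m) σ (z m)) *
          (WW g (x j) σ (z j) * WW g (x k) σ (z k)) ∂P) = 0 := by
      intro j k hjk
      have hEeq : (fun z : Fin d → ℝ => (∏ m, ff (x m) σ (z m)) *
            (WW g (x j) σ (z j) * WW g (x k) σ (z k)))
          = fun z => ∏ m, (ff (x m) σ (z m) *
            ((if m = j then WW g (x j) σ (z m) else 1) *
              (if m = k then WW g (x k) σ (z m) else 1))) := by
        funext z
        rw [Finset.prod_mul_distrib, Finset.prod_mul_distrib,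
          Finset.prod_ite_eq' Finset.univ j (fun m => WW g (x j) σ (z m)),
          Finset.prod_ite_eq' Finset.univ k (fun m => WW g (x k) σ (z m))]
        simp
      rw [hEeq, piUnif_prod_integral (fun m => fun t => ff (x m) σ t *
        ((if m = j then WW g (x j) σ t else 1) * (if m = k then WW g (x k) σ t else 1)))]
      refine Finset.prod_eq_zero (Finset.mem_univ j) ?_
      have heq2 : (fun t => ff (x j) σ t *
          ((if j = j then WW g (x j) σ t else 1) * (if j = k then WW g (x k) σ t else 1)))
          = fun t => ff (x j) σ t * WW g (x j) σ t := by
        funext t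
        rw [if_pos rfl, if_neg hjk, mul_one]
      rw [heq2]
      exact int_ffWW_zero hgc hM10 hLip hσ.le
    -- diagonal terms
    have hdiag : ∀ j : Fin d,
        (∫ z, (∏ m, ff (x m) σ (z m)) *
          (WW g (x j) σ (z j) * WW g (x j) σ (z j)) ∂P) ≤ 4 * (M1*σ)^2 := by
      intro j
      have hEeq : (fun z : Fin d → ℝ => (∏ m, ff (x m) σ (z m)) *
            (WW g (x j) σ (z j) * WW g (x j) σ (z j)))
          = fun z => ∏ m, (ff (x m) σ (z m) *
            ((if m = j then WW g (x j) σ (z m) else 1) *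
              (if m = j then WW g (x j) σ (z m) else 1))) := by
        funext z
        rw [Finset.prod_mul_distrib, Finset.prod_mul_distrib,
          Finset.prod_ite_eq' Finset.univ j (fun m => WW g (x j) σ (z m))]
        simp
      rw [hEeq, piUnif_prod_integral (fun m => fun t => ff (x m) σ t *
        ((if m = j then WW g (x j) σ t else 1) * (if m = j then WW g (x j) σ t else 1)))]
      have hfac : ∀ m : Fin d, (∫ t, ff (x m) σ t *
          ((if m = j then WW g (x j) σ t else 1) * (if m = j then WW g (x j) σ t else 1)) ∂unif)
          = if m = j then vv g (x j) σ else pp (x m) σ := by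
        intro m
        by_cases hm : m = j
        · subst hm
          rw [if_pos rfl]
          have : (fun t => ff (x m) σ t *
              ((if m = m then WW g (x m) σ t else 1) * (if m = m then WW g (x m) σ t else 1)))
              = fun t => ff (x m) σ t * (WW g (x m) σ t * WW g (x m) σ t) := by
            funext t; rw [if_pos rfl]
          rw [this]
          exact int_ffWW_sq (x m)
        · rw [if_neg hm]
          have : (fun t => ff (x m) σ t *
              ((if m = j then WW g (x j) σ t else 1) * (if m = j then WW g (x j) σ t else 1)))
              = fun t => ff (x m) σ t := by
            funext t; rw [if_neg hm, mul_one, mul_one]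
          rw [this]
          rfl
      rw [Finset.prod_congr rfl (fun m _ => hfac m)]
      have hprodsplit : (∏ m, if m = j then vv g (x j) σ else pp (x m) σ)
          = vv g (x j) σ * ∏ m ∈ Finset.univ.erase j, (if m = j then vv g (x j) σ else pp (x m) σ) := by
        rw [← Finset.mul_prod_erase Finset.univ _ (Finset.mem_univ j), if_pos rfl]
      rw [hprodsplit]
      have herase_le : (∏ m ∈ Finset.univ.erase j,
          (if m = j then vv g (x j) σ else pp (x m) σ)) ≤ 1 := by
        refine Finset.prod_le_one (fun m hm => ?_) (fun m hm => ?_)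
        · rw [if_neg (Finset.ne_of_mem_erase hm)]; exact pp_nonneg _ _
        · rw [if_neg (Finset.ne_of_mem_erase hm)]; exact pp_le_one _ _
      have herase_0 : 0 ≤ ∏ m ∈ Finset.univ.erase j,
          (if m = j then vv g (x j) σ else pp (x m) σ) := by
        refine Finset.prod_nonneg fun m hm => ?_
        rw [if_neg (Finset.ne_of_mem_erase hm)]; exact pp_nonneg _ _
      calc vv g (x j) σ * ∏ m ∈ Finset.univ.erase j,
            (if m = j then vv g (x j) σ else pp (x m) σ)
          ≤ vv g (x j) σ * 1 :=
            mul_le_mul_of_nonneg_left herase_le (vv_nonneg g (x j) σ)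
        _ = vv g (x j) σ := mul_one _
        _ ≤ 4 * (M1*σ)^2 := vv_le hgc hM10 hLip hσ.le
    -- the second moment bound
    have hsq_le : (∫ z, (T z)^2 ∂P) ≤ d * (4 * (M1 * σ)^2) := by
      have h1 : (∫ z, (T z)^2 ∂P) = ∑ j, ∑ k, ∫ z, (∏ m, ff (x m) σ (z m)) *
          (WW g (x j) σ (z j) * WW g (x k) σ (z k)) ∂P := by
        rw [integral_congr_ae (Filter.Eventually.of_forall hexpand)]
        rw [integral_finset_sum Finset.univ
          (fun j _ => integrable_finset_sum Finset.univ (fun k _ => hbase_int j k))]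
        exact Finset.sum_congr rfl fun j _ =>
          integral_finset_sum Finset.univ (fun k _ => hbase_int j k)
      rw [h1]
      have h2 : ∀ j : Fin d, (∑ k, ∫ z, (∏ m, ff (x m) σ (z m)) *
          (WW g (x j) σ (z j) * WW g (x k) σ (z k)) ∂P) ≤ 4 * (M1 * σ)^2 := by
        intro j
        rw [Finset.sum_eq_single_of_mem j (Finset.mem_univ j)
          (fun k _ hk => hoff j k (Ne.symm hk))]
        exact hdiag j
      calc (∑ j : Fin d, ∑ k, ∫ z, (∏ m, ff (x m) σ (z m)) *
            (WW g (x j) σ (z j) * WW g (x k) σ (z k)) ∂P)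
          ≤ ∑ _j : Fin d, 4 * (M1 * σ)^2 := Finset.sum_le_sum fun j _ => h2 j
        _ = d * (4 * (M1 * σ)^2) := by
            rw [Finset.sum_const, Finset.card_univ, Fintype.card_fin, nsmul_eq_mul]
    -- Cauchy-Schwarz via variance
    have hT0 : 0 ≤ ∫ z, T z ∂P :=
      integral_nonneg fun z => mul_nonneg (hprod0 z) (abs_nonneg _)
    have hmem2 : MemLp T 2 P := by
      refine MemLp.of_bound hTmeas.aestronglyMeasurable (d * (M1 * σ) + |cs|)
        (hW.mono fun z hz => ?_)
      have hTz : T z = (∏ j, ff (x j) σ (z j)) * |(∑ j, YY g (x j) σ (z j)) - cs| := rfl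
      rw [Real.norm_eq_abs, hTz, abs_mul, abs_of_nonneg (hprod0 z), abs_abs]
      calc (∏ j, ff (x j) σ (z j)) * |(∑ j, YY g (x j) σ (z j)) - cs|
          ≤ 1 * (d * (M1 * σ) + |cs|) :=
            mul_le_mul (hprod1 z) hz (abs_nonneg _) zero_le_one
        _ = d * (M1 * σ) + |cs| := one_mul _
    have hvar := ProbabilityTheory.variance_nonneg T P
    rw [ProbabilityTheory.variance_eq_sub hmem2] at hvar
    have hCS : (∫ z, T z ∂P)^2 ≤ ∫ z, (T z)^2 ∂P := by
      have : (∫ z, (T ^ 2) z ∂P) = ∫ z, (T z)^2 ∂P := by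
        refine integral_congr_ae (Filter.Eventually.of_forall fun z => ?_)
        simp [Pi.pow_apply]
      rw [this] at hvar
      linarith
    calc (∫ z, T z ∂P) = Real.sqrt ((∫ z, T z ∂P)^2) := (Real.sqrt_sq hT0).symm
      _ ≤ Real.sqrt (∫ z, (T z)^2 ∂P) := Real.sqrt_le_sqrt hCS
      _ ≤ Real.sqrt (d * (4 * (M1 * σ)^2)) := Real.sqrt_le_sqrt hsq_le
  -- Step 4: the boundary term
  have step4 : K * ∏ j, pp (x j) σ ≤ M1 * σ + d * (M2 * σ^2) := by
    have hpp0 : ∀ j : Fin d, 0 ≤ pp (x j) σ := fun j => pp_nonneg _ _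
    have hpp1 : ∀ j : Fin d, pp (x j) σ ≤ 1 := fun j => pp_le_one _ _
    have herase0 : ∀ j : Fin d, 0 ≤ ∏ m ∈ Finset.univ.erase j, pp (x m) σ :=
      fun j => Finset.prod_nonneg fun m _ => hpp0 m
    have herase1 : ∀ j : Fin d, (∏ m ∈ Finset.univ.erase j, pp (x m) σ) ≤ 1 :=
      fun j => Finset.prod_le_one (fun m _ => hpp0 m) (fun m _ => hpp1 m)
    have hKle : K ≤ ∑ j, |ccc g (x j) σ| := by
      rw [hKdef]
      refine max_le (Finset.sum_nonneg fun j _ => abs_nonneg _) ?_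
      refine (neg_le_abs cs).trans ?_
      rw [hcsdef]
      exact Finset.abs_sum_le_sum_abs _ _
    have hprodpp0 : 0 ≤ ∏ j, pp (x j) σ := Finset.prod_nonneg fun j _ => hpp0 j
    calc K * ∏ j, pp (x j) σ ≤ (∑ j, |ccc g (x j) σ|) * ∏ j, pp (x j) σ :=
          mul_le_mul_of_nonneg_right hKle hprodpp0
      _ = ∑ j, |ccc g (x j) σ| * ∏ m, pp (x m) σ := Finset.sum_mul _ _ _
      _ ≤ ∑ j, (M1 * σ * (1 - pp (x j) σ) + M2 * σ^2) *
            ∏ m ∈ Finset.univ.erase j, pp (x m) σ := by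
          refine Finset.sum_le_sum fun j _ => ?_
          rw [← Finset.mul_prod_erase Finset.univ _ (Finset.mem_univ j), ← mul_assoc]
          refine mul_le_mul_of_nonneg_right ?_ (herase0 j)
          refine (ccc_pp_le).trans ?_
          exact qq_refined hgc hM10 hM20 hM1b hLip hTay hσ (hxj j)
      _ = M1 * σ * (∑ j, (1 - pp (x j) σ) * ∏ m ∈ Finset.univ.erase j, pp (x m) σ)
            + M2 * σ^2 * (∑ j, ∏ m ∈ Finset.univ.erase j, pp (x m) σ) := by
          rw [Finset.mul_sum, Finset.mul_sum, ← Finset.sum_add_distrib]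
          refine Finset.sum_congr rfl fun j _ => ?_
          ring
      _ ≤ M1 * σ * 1 + M2 * σ^2 * d := by
          refine add_le_add ?_ ?_
          · refine mul_le_mul_of_nonneg_left ?_ (by positivity)
            refine (damping Finset.univ (fun m => pp (x m) σ) hpp0 hpp1).trans ?_
            have := Finset.prod_nonneg (s := Finset.univ) fun m (_ : m ∈ Finset.univ) => hpp0 m
            linarith
          · refine mul_le_mul_of_nonneg_left ?_ (by positivity)
            have := Finset.sum_le_card_nsmul Finset.univ
              (fun j => ∏ m ∈ Finset.univ.erase j, pp (x m) σ) 1 (fun j _ => herase1 j)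
            simpa [Finset.card_univ, nsmul_eq_mul] using this
      _ = M1 * σ + d * (M2 * σ^2) := by ring
  calc ∫ z, (∏ j, ff (x j) σ (z j)) *
      (1 - min 1 (Real.exp (∑ j, YY g (x j) σ (z j)))) ∂P
      ≤ _ := step1
    _ = _ := step2
    _ ≤ Real.sqrt (d * (4 * (M1 * σ)^2)) + (M1 * σ + d * (M2 * σ^2)) :=
        add_le_add step3 step4
/-! ### assembling the bound -/

lemma integrand_eq (g : ℝ → ℝ) (σ : ℝ) {d : ℕ} (x z : Fin d → ℝ)
    (hxj : ∀ j, x j ∈ Set.Icc (0:ℝ) 1) :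
    (∏ j, Set.indicator (Set.Ioo (0:ℝ) 1) (fun _ => (1:ℝ)) (x j + σ * z j)) *
      (1 - min 1 (Real.exp (∑ j, (g (x j + σ * z j) - g (x j)))))
    = (∏ j, ff (x j) σ (z j)) * (1 - min 1 (Real.exp (∑ j, YY g (x j) σ (z j)))) := by
  by_cases hz : ∀ j, x j + σ * z j ∈ Set.Ioo (0:ℝ) 1
  · have h1 : ∀ j : Fin d, g (x j + σ * z j) - g (x j) = YY g (x j) σ (z j) := by
      intro j
      have hIcc : x j + σ * z j ∈ Set.Icc (0:ℝ) 1 := ⟨(hz j).1.le, (hz j).2.le⟩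
      show g (x j + σ * z j) - g (x j)
        = g (max 0 (min 1 (x j + σ * z j))) - g (max 0 (min 1 (x j)))
      rw [clamp_eq hIcc, clamp_eq (hxj j)]
    have h2 : (∑ j, (g (x j + σ * z j) - g (x j))) = ∑ j, YY g (x j) σ (z j) :=
      Finset.sum_congr rfl fun j _ => h1 j
    rw [h2]
    rfl
  · push_neg at hz
    obtain ⟨j0, hj0⟩ := hz
    have hL : (∏ j, Set.indicator (Set.Ioo (0:ℝ) 1) (fun _ => (1:ℝ)) (x j + σ * z j)) = 0 :=
      Finset.prod_eq_zero (Finset.mem_univ j0) (Set.indicator_of_notMem hj0 _)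
    have hR : (∏ j, ff (x j) σ (z j)) = 0 :=
      Finset.prod_eq_zero (Finset.mem_univ j0) (Set.indicator_of_notMem hj0 _)
    rw [hL, hR, zero_mul, zero_mul]

lemma coupleFail_bound (l : ℝ) (hl : 0 < l) (g : ℝ → ℝ)
    (hg : ContDiffOn ℝ 2 g (Set.Icc 0 1)) :
    ∃ C : ℝ, 0 ≤ C ∧ ∀ d : ℕ, 1 ≤ d → ∀ x : Fin d → ℝ,
      x ∈ Set.univ.pi (fun _ : Fin d => Set.Icc (0:ℝ) 1) →
      coupleFail g l d x ≤ C / Real.sqrt d := by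
  obtain ⟨M1, M2, hM10, hM20, hM1b, hLip, hTay⟩ := taylor_bound hg
  have hgc := hg.continuousOn
  refine ⟨2*(M1*l) + (M1*l + M2*l^2), by positivity, ?_⟩
  intro d hd x hx
  have hd1 : (1:ℝ) ≤ d := by exact_mod_cast hd
  have hd0 : (0:ℝ) < d := by linarith
  set σ : ℝ := l / d with hσdef
  have hσ : 0 < σ := div_pos hl hd0
  have hxj : ∀ j, x j ∈ Set.Icc (0:ℝ) 1 := fun j => hx j (Set.mem_univ j)
  have h0 : coupleFail g l d x = ∫ z, (∏ j, ff (x j) σ (z j)) *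
      (1 - min 1 (Real.exp (∑ j, YY g (x j) σ (z j)))) ∂(piUnif d) := by
    rw [coupleFail_eq]
    refine integral_congr_ae (Filter.Eventually.of_forall fun z => ?_)
    have h1 := integrand_eq g σ x z hxj
    rw [hσdef] at h1
    exact h1
  rw [h0]
  refine (multi_bound g σ hσ x hxj hgc hM10 hM20 hM1b hLip hTay).trans ?_
  set s := Real.sqrt d with hsdef
  have hs1 : 1 ≤ s := by
    rw [hsdef]
    calc (1:ℝ) = Real.sqrt 1 := Real.sqrt_one.symm
      _ ≤ Real.sqrt d := Real.sqrt_le_sqrt hd1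
  have hs0 : 0 < s := lt_of_lt_of_le one_pos hs1
  have hss : s * s = d := Real.mul_self_sqrt hd0.le
  have hd_eq : (d:ℝ) = s * s := hss.symm
  have hσs : σ * (s * s) = l := by
    rw [hss, hσdef, div_mul_cancel₀ _ hd0.ne']
  have hsqrt_eq : Real.sqrt (d * (4 * (M1 * σ)^2)) = 2 * (M1 * σ) * s := by
    rw [show (d:ℝ) * (4 * (M1*σ)^2) = (2*(M1*σ))^2 * d by ring,
      Real.sqrt_mul (by positivity) _, Real.sqrt_sq (by positivity)]
  rw [hsqrt_eq, le_div_iff₀ hs0, hd_eq]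
  have haux1 : σ * s ≤ l := by nlinarith [mul_pos hσ hs0]
  calc (2 * (M1 * σ) * s + (M1 * σ + s * s * (M2 * σ^2))) * s
      = 2*M1*(σ*(s*s)) + M1*(σ*s) + M2*(σ*(s*s))*(σ*s) := by ring
    _ = 2*M1*l + M1*(σ*s) + M2*l*(σ*s) := by rw [hσs]
    _ ≤ 2*M1*l + M1*l + M2*l*l := by
        refine add_le_add (add_le_add le_rfl ?_) ?_
        · exact mul_le_mul_of_nonneg_left haux1 hM10
        · exact mul_le_mul_of_nonneg_left haux1 (by positivity)
    _ = 2*(M1*l) + (M1*l + M2*l^2) := by ring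

/-! ### the main theorem -/

set_option maxHeartbeats 1000000 in
/-- Lemma A.6: for every `α < 1/2`, `d^α sup_{x ∈ [0,1]^d} D_d(x) → 0` as `d → ∞`. -/
theorem coupling_failure_probability_sup (l : ℝ) (hl : 0 < l) (g : ℝ → ℝ)
    (hg : ContDiffOn ℝ 2 g (Set.Icc 0 1))
    (α : ℝ) (hα : α < 1/2) :
    Tendsto (fun d : ℕ =>
        (d:ℝ) ^ α *
          sSup ((fun x : Fin d → ℝ => coupleFail g l d x) ''
            Set.univ.pi (fun _ : Fin d => Set.Icc (0:ℝ) 1)))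
      atTop (nhds 0) := by
  obtain ⟨C, hC0, hC⟩ := coupleFail_bound l hl g hg
  have htend : Tendsto (fun d : ℕ => C * (d:ℝ)^(α - 1/2)) atTop (nhds 0) := by
    have he : α - 1/2 = -(1/2 - α) := by ring
    rw [he]
    have h1 : Tendsto (fun t : ℝ => t^(-(1/2 - α))) atTop (nhds 0) :=
      tendsto_rpow_neg_atTop (by linarith)
    have h2 : Tendsto (fun d : ℕ => ((d:ℝ))^(-(1/2 - α))) atTop (nhds 0) :=
      h1.comp tendsto_natCast_atTop_atTop
    simpa using h2.const_mul C
  refine tendsto_of_tendsto_of_tendsto_of_le_of_le' tendsto_const_nhds htend ?_ ?_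
  · -- eventually 0 ≤ value
    filter_upwards [Filter.eventually_ge_atTop 1] with d hd
    have hd0 : (0:ℝ) ≤ (d:ℝ)^α := Real.rpow_nonneg (Nat.cast_nonneg d) α
    refine mul_nonneg hd0 ?_
    -- 0 ≤ sSup : the image contains a nonnegative element and is bounded above
    have hx0 : (fun _ : Fin d => (0:ℝ)) ∈ Set.univ.pi (fun _ : Fin d => Set.Icc (0:ℝ) 1) :=
      fun j _ => ⟨le_rfl, zero_le_one⟩
    have hmem : coupleFail g l d (fun _ => 0) ∈
        ((fun x : Fin d → ℝ => coupleFail g l d x) ''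
          Set.univ.pi (fun _ : Fin d => Set.Icc (0:ℝ) 1)) :=
      ⟨fun _ => 0, hx0, rfl⟩
    have hbdd : BddAbove ((fun x : Fin d → ℝ => coupleFail g l d x) ''
        Set.univ.pi (fun _ : Fin d => Set.Icc (0:ℝ) 1)) := by
      refine ⟨C / Real.sqrt d, ?_⟩
      rintro y ⟨x, hxmem, rfl⟩
      exact hC d hd x hxmem
    exact le_trans (coupleFail_nonneg g l d _) (le_csSup hbdd hmem)
  · -- eventually value ≤ C d^(α-1/2)
    filter_upwards [Filter.eventually_ge_atTop 1] with d hd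
    have hd1 : (1:ℝ) ≤ d := by exact_mod_cast hd
    have hd0 : (0:ℝ) < d := by linarith
    have hsup_le : sSup ((fun x : Fin d → ℝ => coupleFail g l d x) ''
        Set.univ.pi (fun _ : Fin d => Set.Icc (0:ℝ) 1)) ≤ C / Real.sqrt d := by
      refine Real.sSup_le ?_ (div_nonneg hC0 (Real.sqrt_nonneg _))
      rintro y ⟨x, hxmem, rfl⟩
      exact hC d hd x hxmem
    have hrw : (d:ℝ)^α * (C / Real.sqrt d) = C * (d:ℝ)^(α - 1/2) := by
      rw [Real.sqrt_eq_rpow, Real.rpow_sub hd0]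
      ring
    calc (d:ℝ)^α * sSup ((fun x : Fin d → ℝ => coupleFail g l d x) ''
          Set.univ.pi (fun _ : Fin d => Set.Icc (0:ℝ) 1))
        ≤ (d:ℝ)^α * (C / Real.sqrt d) :=
          mul_le_mul_of_nonneg_left hsup_le (Real.rpow_nonneg (Nat.cast_nonneg d) α)
      _ = C * (d:ℝ)^(α - 1/2) := hrw
end
end

section
/- Let 0 < q < p ≤ 1. Let X be geometric with success probability p on {1,2,…} (P(X = k) = (1−p)^{k−1}p), let Z be geometric with success probability q on {1,2,…}, let A be Bernoulli with P(A = 1) = q/p, and suppose X, Z, A are mutually independent. Then X + (1−A)·Z is geometric with success probability q on {1,2,…}; consequently there exists a coupling of X and a geometric-q random variable Y such that P(X ≠ Y) = (p−q)/p. -/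
open MeasureTheory ProbabilityTheory

/-- Lemma B.1 (geometric coupling): if `X ∼ Geom(p)`, `Z ∼ Geom(q)` on `{1,2,…}` and `A` is
Bernoulli with `P(A=1) = q/p`, all mutually independent, then `X + (1-A)Z ∼ Geom(q)`, and
`P(X ≠ X + (1-A)Z) = (p-q)/p`. -/
theorem geometric_coupling {Ω : Type*} [MeasurableSpace Ω]
    (P : Measure Ω) [IsProbabilityMeasure P]
    (p q : ℝ) (hq : 0 < q) (hqp : q < p) (hp : p ≤ 1)
    (X Z A : Ω → ℕ)
    (hXmeas : Measurable X) (hZmeas : Measurable Z) (hAmeas : Measurable A)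
    (hX : ∀ k : ℕ, 1 ≤ k → (P {ω | X ω = k}).toReal = (1 - p) ^ (k - 1) * p)
    (hX0 : P {ω | X ω = 0} = 0)
    (hZ : ∀ k : ℕ, 1 ≤ k → (P {ω | Z ω = k}).toReal = (1 - q) ^ (k - 1) * q)
    (hZ0 : P {ω | Z ω = 0} = 0)
    (hA : (P {ω | A ω = 1}).toReal = q / p)
    (hA01 : ∀ ω, A ω = 0 ∨ A ω = 1)
    (hindep : iIndepFun (m := fun _ : Fin 3 => (inferInstance : MeasurableSpace ℕ)) ![X, Z, A] P) :
    (∀ k : ℕ, 1 ≤ k →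
        (P {ω | X ω + (1 - A ω) * Z ω = k}).toReal = (1 - q) ^ (k - 1) * q) ∧
      (P {ω | X ω + (1 - A ω) * Z ω ≠ X ω}).toReal = (p - q) / p := by
  have hp0 : (0:ℝ) < p := hq.trans hqp
  have hpne : p ≠ 0 := ne_of_gt hp0
  -- key independence fact
  have hkey : ∀ s t u : Set ℕ,
      P (X ⁻¹' s ∩ (Z ⁻¹' t ∩ A ⁻¹' u)) = P (X ⁻¹' s) * P (Z ⁻¹' t) * P (A ⁻¹' u) := by
    intro s t u
    have h := hindep.measure_inter_preimage_eq_mul (sets := ![s, t, u]) Finset.univ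
      (fun i _ => by fin_cases i <;> exact trivial)
    have heq : (⋂ i, ![X, Z, A] i ⁻¹' ![s, t, u] i) = X ⁻¹' s ∩ (Z ⁻¹' t ∩ A ⁻¹' u) := by
      ext ω; simp [Fin.forall_fin_succ]
    simpa [Fin.prod_univ_three, mul_assoc, heq] using h
  -- event rewrites
  have hsX : ∀ j : ℕ, X ⁻¹' {j} = {ω | X ω = j} := fun j => rfl
  have hsZ : ∀ j : ℕ, Z ⁻¹' {j} = {ω | Z ω = j} := fun j => rfl
  have hsA : ∀ j : ℕ, A ⁻¹' {j} = {ω | A ω = j} := fun j => rfl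
  -- P(A=0)
  have hA1' : (P (A ⁻¹' {1})).toReal = q / p := by rw [hsA]; exact hA
  have hA0 : (P (A ⁻¹' {0})).toReal = (p - q) / p := by
    have hunion : A ⁻¹' {0} ∪ A ⁻¹' {1} = Set.univ := by
      ext ω; rcases hA01 ω with h | h <;> simp [h]
    have hdisj : Disjoint (A ⁻¹' ({0} : Set ℕ)) (A ⁻¹' {1}) := by
      rw [Set.disjoint_left]; intro ω h0 h1
      simp only [Set.mem_preimage, Set.mem_singleton_iff] at h0 h1; omega
    have hadd : P (A ⁻¹' {0}) + P (A ⁻¹' {1}) = 1 := by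
      rw [← measure_union hdisj (hAmeas (measurableSet_singleton 1)), hunion, measure_univ]
    have := congrArg ENNReal.toReal hadd
    rw [ENNReal.toReal_add (measure_ne_top P _) (measure_ne_top P _), hA1'] at this
    simp only [ENNReal.toReal_one] at this
    have h' : (P (A ⁻¹' {0})).toReal = 1 - q / p := by linarith
    rw [h']
    field_simp
  refine ⟨?_, ?_⟩
  · -- main geometric claim
    intro k hk
    obtain ⟨m, rfl⟩ : ∃ m, k = m + 1 := ⟨k - 1, by omega⟩
    -- decompose the event
    set E1 : Set Ω := X ⁻¹' {m + 1} ∩ (Z ⁻¹' Set.univ ∩ A ⁻¹' {1}) with hE1def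
    set E2 : Set Ω := {ω | A ω = 0} ∩ {ω | X ω + Z ω = m + 1} with hE2def
    have hE : {ω | X ω + (1 - A ω) * Z ω = m + 1} = E1 ∪ E2 := by
      ext ω
      rcases hA01 ω with h | h <;>
        simp only [hE1def, hE2def, Set.mem_setOf_eq, Set.mem_union, Set.mem_inter_iff,
          Set.mem_preimage, Set.mem_singleton_iff, Set.mem_univ, h, and_true, true_and] <;>
        omega
    have hE1meas : MeasurableSet E1 :=
      ((hXmeas (measurableSet_singleton _)).inter
        ((hZmeas MeasurableSet.univ).inter (hAmeas (measurableSet_singleton _))))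
    have hE2meas : MeasurableSet E2 := by
      have : E2 = A ⁻¹' {0} ∩ (fun ω => X ω + Z ω) ⁻¹' {m + 1} := rfl
      rw [this]
      exact (hAmeas (measurableSet_singleton _)).inter
        ((hXmeas.add hZmeas) (measurableSet_singleton _))
    have hdisj12 : Disjoint E1 E2 := by
      rw [Set.disjoint_left]; intro ω h1 h2
      simp only [hE1def, hE2def, Set.mem_inter_iff, Set.mem_preimage, Set.mem_singleton_iff,
        Set.mem_setOf_eq] at h1 h2
      omega
    -- split E2 over the value of X
    set D : ℕ → Set Ω := fun j => X ⁻¹' {j} ∩ (Z ⁻¹' {m + 1 - j} ∩ A ⁻¹' {0}) with hDdef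
    have hE2eq : E2 = ⋃ j ∈ Finset.range (m + 2), D j := by
      ext ω
      simp only [hE2def, hDdef, Set.mem_setOf_eq, Set.mem_iUnion, Set.mem_inter_iff,
        Set.mem_preimage, Set.mem_singleton_iff, Finset.mem_range, exists_prop]
      constructor
      · rintro ⟨h0, hxz⟩
        exact ⟨X ω, by omega, by omega, by omega, h0⟩
      · rintro ⟨j, hj, hx, hz, h0⟩
        exact ⟨h0, by omega⟩
    have hDdisj : (↑(Finset.range (m + 2)) : Set ℕ).PairwiseDisjoint D := by
      intro i _ j _ hij
      rw [Function.onFun, Set.disjoint_left]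
      intro ω hi hj
      simp only [hDdef, Set.mem_inter_iff, Set.mem_preimage, Set.mem_singleton_iff] at hi hj
      exact hij (hi.1 ▸ hj.1 ▸ rfl)
    have hDmeas : ∀ j ∈ Finset.range (m + 2), MeasurableSet (D j) := by
      intro j _
      exact (hXmeas (measurableSet_singleton _)).inter
        ((hZmeas (measurableSet_singleton _)).inter (hAmeas (measurableSet_singleton _)))
    have hPE2 : P E2 = ∑ j ∈ Finset.range (m + 2), P (D j) := by
      rw [hE2eq, measure_biUnion_finset hDdisj hDmeas]
    -- to real numbers
    have hPE : (P {ω | X ω + (1 - A ω) * Z ω = m + 1}).toReal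
        = (P E1).toReal + (P E2).toReal := by
      rw [hE, measure_union hdisj12 hE2meas,
        ENNReal.toReal_add (measure_ne_top P _) (measure_ne_top P _)]
    have hPE1 : (P E1).toReal = (1 - p) ^ m * p * (q / p) := by
      rw [hE1def, hkey]
      simp only [Set.preimage_univ, measure_univ, one_mul, ENNReal.toReal_mul]
      rw [hsX, hA1', hX (m + 1) (by omega)]
      simp
    have hPD : ∀ j : ℕ, (P (D j)).toReal
        = (P (X ⁻¹' {j})).toReal * (P (Z ⁻¹' {m + 1 - j})).toReal * (P (A ⁻¹' {0})).toReal := by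
      intro j
      rw [hDdef]
      simp only [hkey, ENNReal.toReal_mul]
    have hPE2' : (P E2).toReal
        = ∑ j ∈ Finset.range (m + 2),
            (P (X ⁻¹' {j})).toReal * (P (Z ⁻¹' {m + 1 - j})).toReal
              * (P (A ⁻¹' {0})).toReal := by
      rw [hPE2, ENNReal.toReal_sum (fun j _ => measure_ne_top P _)]
      exact Finset.sum_congr rfl fun j _ => hPD j
    -- evaluate the sum
    set f : ℕ → ℝ := fun j =>
      (P (X ⁻¹' {j})).toReal * (P (Z ⁻¹' {m + 1 - j})).toReal * (P (A ⁻¹' {0})).toReal with hfdef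
    have hf0 : f 0 = 0 := by
      simp only [hfdef, hsX, hX0]
      simp
    have hftop : f (m + 1) = 0 := by
      simp only [hfdef]
      have : m + 1 - (m + 1) = 0 := by omega
      rw [this, hsZ, hZ0]
      simp
    have hsum : ∑ j ∈ Finset.range (m + 2), f j = ∑ j ∈ Finset.range m, f (j + 1) := by
      rw [Finset.sum_range_succ, hftop, add_zero, Finset.sum_range_succ', hf0, add_zero]
    have hfmid : ∀ j ∈ Finset.range m,
        f (j + 1) = ((1 - p) ^ j * (1 - q) ^ (m - 1 - j)) * (p * q * ((p - q) / p)) := by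
      intro j hj
      rw [Finset.mem_range] at hj
      have h1 : m + 1 - (j + 1) = m - j := by omega
      have h2 : (1:ℕ) ≤ m - j := by omega
      have h3 : m - j - 1 = m - 1 - j := by omega
      simp only [hfdef, h1, hsX, hsZ]
      rw [hX (j + 1) (by omega), hZ (m - j) h2, hA0, h3]
      simp only [Nat.add_sub_cancel]
      ring
    have key := geom_sum₂_mul (1 - p) (1 - q) m
    have hsum2 : ∑ j ∈ Finset.range m, f (j + 1)
        = (∑ j ∈ Finset.range m, (1 - p) ^ j * (1 - q) ^ (m - 1 - j))
            * (p * q * ((p - q) / p)) :=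
      (Finset.sum_congr rfl hfmid).trans (Finset.sum_mul _ _ _).symm
    rw [hPE, hPE1, hPE2', hsum, hsum2]
    simp only [Nat.add_sub_cancel]
    set S := ∑ j ∈ Finset.range m, (1 - p) ^ j * (1 - q) ^ (m - 1 - j) with hSdef
    have h1 : p * (q / p) = q := by field_simp
    have h2 : p * q * ((p - q) / p) = q * (p - q) := by field_simp
    rw [mul_assoc, h1, h2]
    linear_combination (-q) * key
  · -- the coupling inequality probability
    have hne : {ω | X ω + (1 - A ω) * Z ω ≠ X ω} = A ⁻¹' {0} ∩ {ω | Z ω ≠ 0} := by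
      ext ω
      rcases hA01 ω with h | h <;> simp [h]
    have hP : P (A ⁻¹' {0} ∩ {ω | Z ω ≠ 0}) = P (A ⁻¹' {0}) := by
      apply le_antisymm (measure_mono Set.inter_subset_left)
      calc P (A ⁻¹' {0}) ≤ P ((A ⁻¹' {0} ∩ {ω | Z ω ≠ 0}) ∪ {ω | Z ω = 0}) := by
            apply measure_mono
            intro ω h0
            by_cases hz : Z ω = 0
            · exact Or.inr hz
            · exact Or.inl ⟨h0, hz⟩
        _ ≤ P (A ⁻¹' {0} ∩ {ω | Z ω ≠ 0}) + P {ω | Z ω = 0} := measure_union_le _ _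
        _ = P (A ⁻¹' {0} ∩ {ω | Z ω ≠ 0}) := by rw [hZ0, add_zero]
    rw [hne, hP, hA0]
end
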